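/- arXiv:math/0409533 — 7 statements merged into one kernel-verified Lean document; each statement's English description precedes it below -/
import Mathlib

section
/- Let k be a field, m a natural number with char(k) ∤ m, and ω_m the number of m-th roots of unity in k. Then the splitting field of x^m - a over k has abelian Galois group over k if and only if a^{ω_m} = γ^m for some γ ∈ k. -/
/-!
Let `ζ` be a primitive `m`-th root of unity and `α ^ m = a` in `K`, so `K = k(ζ, α)`, and write
`σ ζ = ζ ^ c σ`, `σ α = ζ ^ b σ * α` for `σ ∈ Gal(K/k)`. Then `σ` and `τ` commute iff
`b τ (c σ - 1) ≡ b σ (c τ - 1) mod m`. The `m`-th roots of unity of `k` form a cyclic group of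
order `ω` whose generator is Galois-invariant, so `ω ∣ c σ - 1`; and the gcd `g` of `m` and all
`c σ - 1` divides `ω`, because `ζ ^ (m / g)` is Galois-invariant and hence lies in `k`.

If the group is abelian, a Bezout combination gives `r` with `b σ g ≡ r (c σ - 1) mod m` for all
`σ`, and then `α ^ ω * ζ ^ (-r ω / g)` is Galois-invariant: it is some `γ ∈ k` with
`γ ^ m = a ^ ω`. If conversely `a ^ ω = γ ^ m`, then `α ^ ω = ζ ^ t γ`, so
`ω b σ ≡ t (c σ - 1) mod m`, i.e. `b σ ≡ t (c σ - 1) / ω mod m / ω`, and the commutation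
congruence follows.
-/

open Polynomial

open scoped Classical

-- If all ratios `B i / D i` agree modulo `M`, they agree with one ratio `r / g` (Bezout).
theorem Int.exists_dvd_sub_mul_of_dvd_cross {ι : Type*} [Fintype ι] (M : ℤ) (B D : ι → ℤ)
    (h : ∀ i j, M ∣ B j * D i - B i * D j) :
    ∃ g r : ℤ, g ∣ M ∧ (∀ i, g ∣ D i) ∧ ∀ j, M ∣ r * D j - B j * g := by
  suffices ∀ s : Finset ι, ∃ g r : ℤ, g ∣ M ∧ (∀ i ∈ s, g ∣ D i) ∧ ∀ j, M ∣ r * D j - B j * g by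
    obtain ⟨g, r, hgM, hgD, hr⟩ := this Finset.univ
    exact ⟨g, r, hgM, fun i => hgD i (Finset.mem_univ i), hr⟩
  intro s
  induction s using Finset.induction with
  | empty => exact ⟨M, 0, dvd_rfl, by simp, fun j => ⟨-B j, by ring⟩⟩
  | insert i s _ ih =>
    obtain ⟨g, r, hgM, hgD, hr⟩ := ih
    refine ⟨gcd (D i) g, gcdA (D i) g * B i + gcdB (D i) g * r,
      (Int.gcd_dvd_right _ _).trans hgM, ?_, fun j => ?_⟩
    · simp only [Finset.mem_insert, forall_eq_or_imp]
      exact ⟨Int.gcd_dvd_left _ _, fun i' hi' => (Int.gcd_dvd_right _ _).trans (hgD i' hi')⟩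
    · have hbezout : (gcdA (D i) g * B i + gcdB (D i) g * r) * D j - B j * gcd (D i) g =
          gcdA (D i) g * (B i * D j - B j * D i) + gcdB (D i) g * (r * D j - B j * g) := by
        rw [gcd_eq_gcd_ab]; ring
      rw [hbezout]
      exact dvd_add ((h j i).mul_left _) ((hr j).mul_left _)

theorem Int.dvd_cross_of_dvd_sub_mul {m ω t b₁ b₂ d₁ d₂ : ℤ} (hω : ω ≠ 0) (hωm : ω ∣ m)
    (h₁ : m ∣ ω * b₁ - t * (ω * d₁)) (h₂ : m ∣ ω * b₂ - t * (ω * d₂)) :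
    m ∣ b₂ * (ω * d₁) - b₁ * (ω * d₂) := by
  obtain ⟨m', rfl⟩ := hωm
  rw [show ω * b₁ - t * (ω * d₁) = ω * (b₁ - t * d₁) by ring, mul_dvd_mul_iff_left hω] at h₁
  rw [show ω * b₂ - t * (ω * d₂) = ω * (b₂ - t * d₂) by ring, mul_dvd_mul_iff_left hω] at h₂
  rw [show b₂ * (ω * d₁) - b₁ * (ω * d₂) = ω * ((b₂ - t * d₂) * d₁ - (b₁ - t * d₁) * d₂) by ring,
    mul_dvd_mul_iff_left hω]
  exact dvd_sub (h₂.mul_right _) (h₁.mul_right _)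

theorem natCard_rootsOfUnity_eq_card_toFinset_nthRoots {R : Type*} [CommRing R] [IsDomain R]
    [DecidableEq R] (m : ℕ) [NeZero m] :
    Nat.card (rootsOfUnity m R) = (nthRoots m (1 : R)).toFinset.card := by
  rw [Nat.card_congr (rootsOfUnityEquivNthRoots R m), ← Nat.card_eq_finsetCard]
  exact Nat.card_congr (Equiv.subtypeEquivRight fun _ => Multiset.mem_toFinset.symm)

theorem exists_isPrimitiveRoot_natCard_rootsOfUnity (R : Type*) [CommRing R] [IsDomain R] (m : ℕ)
    [NeZero m] : ∃ η : R, IsPrimitiveRoot η (Nat.card (rootsOfUnity m R)) := by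
  obtain ⟨η, hη⟩ := (rootsOfUnity.isCyclic R m).exists_ofOrder_eq_natCard
  rw [← IsPrimitiveRoot.iff_orderOf, ← IsPrimitiveRoot.coe_submonoidClass_iff,
    ← IsPrimitiveRoot.coe_units_iff] at hη
  exact ⟨_, hη⟩

theorem pow_natCard_rootsOfUnity_eq_one {M : Type*} [CommMonoid M] {m : ℕ} [NeZero m]
    {y : M} (hy : y ^ m = 1) : y ^ Nat.card (rootsOfUnity m M) = 1 := by
  simpa using congrArg (fun u : rootsOfUnity m M => ((u : Mˣ) : M))
    (pow_card_eq_one' (x := rootsOfUnity.mkOfPowEq y hy))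

theorem natCard_rootsOfUnity_dvd (R : Type*) [CommRing R] [IsDomain R] (m : ℕ) [NeZero m] :
    Nat.card (rootsOfUnity m R) ∣ m := by
  rw [← IsCyclic.exponent_eq_card]
  exact Monoid.exponent_dvd_of_forall_pow_eq_one fun g => OneMemClass.coe_eq_one.mp g.prop

namespace IsPrimitiveRoot

variable {K : Type*} [Field K] {m : ℕ} [NeZero m] {ζ : K}

theorem zpow_eq_zpow_iff_dvd (hζ : IsPrimitiveRoot ζ m) {i j : ℤ} :
    ζ ^ i = ζ ^ j ↔ (m : ℤ) ∣ i - j := by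
  have hζ0 : ζ ≠ 0 := hζ.ne_zero (NeZero.ne m)
  rw [← hζ.zpow_eq_one_iff_dvd, zpow_sub₀ hζ0, div_eq_one_iff_eq (zpow_ne_zero _ hζ0)]

theorem exists_pow_mul_eq (hζ : IsPrimitiveRoot ζ m) {x y : K} (hx : x ≠ 0)
    (h : y ^ m = x ^ m) : ∃ i : ℕ, y = ζ ^ i * x := by
  obtain ⟨i, -, hi⟩ := hζ.eq_pow_of_pow_eq_one (ξ := y / x) (by
    rw [div_pow, h, div_self (pow_ne_zero m hx)])
  exact ⟨i, by rw [hi, div_mul_cancel₀ y hx]⟩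

theorem exists_zpow_mul_eq (hζ : IsPrimitiveRoot ζ m) {x y : K} (hx : x ≠ 0)
    (h : y ^ m = x ^ m) : ∃ i : ℤ, y = ζ ^ i * x := by
  obtain ⟨i, hi⟩ := hζ.exists_pow_mul_eq hx h
  exact ⟨i, by rwa [zpow_natCast]⟩

end IsPrimitiveRoot

theorem exists_isPrimitiveRoot_of_le_card_nthRootsFinset {K : Type*} [Field K] {m : ℕ} [NeZero m]
    {α : K} (hα : α ≠ 0) (h : m ≤ (nthRootsFinset m (α ^ m)).card) :
    ∃ ζ : K, IsPrimitiveRoot ζ m := by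
  refine (HasEnoughRootsOfUnity.of_card_le (h.trans ?_)).exists_primitiveRoot
  rw [natCard_rootsOfUnity_eq_card_toFinset_nthRoots]
  refine Finset.card_le_card_of_injOn (· / α) (fun x hx => ?_) (fun x _ y _ hxy => ?_)
  · simp only [Finset.mem_coe, mem_nthRootsFinset (NeZero.pos m)] at hx
    simp [Multiset.mem_toFinset, mem_nthRoots (NeZero.pos m), div_pow, hx, hα]
  · exact (div_left_inj' hα).mp hxy

theorem card_nthRootsFinset_of_isSplittingField_X_pow_sub_C {k K : Type*} [Field k] [Field K]
    [Algebra k K] {m : ℕ} {a : k} (hm : (m : k) ≠ 0) (ha : a ≠ 0)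
    [IsSplittingField k K (X ^ m - C a)] :
    (nthRootsFinset m (algebraMap k K a)).card = m := by
  have hmap : (X ^ m - C a).map (algebraMap k K) = X ^ m - C (algebraMap k K a) := by simp
  have hsep := (separable_X_pow_sub_C a hm ha).map (f := algebraMap k K)
  have hspl := IsSplittingField.splits K (X ^ m - C a)
  rw [hmap] at hsep hspl
  rw [nthRootsFinset, nthRoots, Multiset.toFinset_card_of_nodup (nodup_roots hsep),
    splits_iff_card_roots.mp hspl, natDegree_X_pow_sub_C]

theorem exists_pow_eq_and_isPrimitiveRoot_of_isSplittingField_X_pow_sub_C {k K : Type*} [Field k]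
    [Field K] [Algebra k K] {m : ℕ} [NeZero m] {a : k} (hm : (m : k) ≠ 0) (ha : a ≠ 0)
    [IsSplittingField k K (X ^ m - C a)] :
    ∃ α : K, α ^ m = algebraMap k K a ∧ ∃ ζ : K, IsPrimitiveRoot ζ m := by
  have hcard := card_nthRootsFinset_of_isSplittingField_X_pow_sub_C (K := K) hm ha
  obtain ⟨α, hα⟩ := Finset.card_pos.mp (hcard ▸ NeZero.pos m)
  rw [mem_nthRootsFinset (NeZero.pos m)] at hα
  have hα0 : α ≠ 0 := by
    rintro rfl
    rw [zero_pow (NeZero.ne m), eq_comm, map_eq_zero] at hα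
    exact ha hα
  refine ⟨α, hα, exists_isPrimitiveRoot_of_le_card_nthRootsFinset hα0 ?_⟩
  rw [hα, hcard]

theorem AlgEquiv.ext_of_isSplittingField_X_pow_sub_C {k K : Type*} [Field k] [Field K]
    [Algebra k K] {m : ℕ} [NeZero m] {a : k} [IsSplittingField k K (X ^ m - C a)] {ζ α : K}
    (hζ : IsPrimitiveRoot ζ m) (hα : α ^ m = algebraMap k K a) (hα0 : α ≠ 0)
    {σ τ : K ≃ₐ[k] K} (hσζ : σ ζ = τ ζ) (hσα : σ α = τ α) : σ = τ := by
  refine AlgEquiv.coe_toAlgHom_injective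
    (AlgHom.ext_of_adjoin_eq_top (IsSplittingField.adjoin_rootSet K (X ^ m - C a)) ?_)
  intro r hr
  have hr : r ^ m = α ^ m := by
    rw [hα]
    simpa [sub_eq_zero] using (mem_rootSet.mp hr).2
  obtain ⟨i, rfl⟩ := hζ.exists_pow_mul_eq hα0 hr
  simp [hσζ, hσα]

namespace Schinzel

variable {k K : Type*} [Field k] [Field K] [Algebra k K] {m : ℕ} [NeZero m] {ζ α : K}
  {b c : (K ≃ₐ[k] K) → ℤ}

theorem apply_eq_zpow_of_pow_eq_one (hζ : IsPrimitiveRoot ζ m)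
    (hc : ∀ σ : K ≃ₐ[k] K, σ ζ = ζ ^ c σ) (σ : K ≃ₐ[k] K) {x : K} (hx : x ^ m = 1) :
    σ x = x ^ c σ := by
  obtain ⟨i, rfl⟩ := hζ.exists_pow_mul_eq one_ne_zero (by rw [hx, one_pow])
  rw [mul_one, map_pow, hc, ← zpow_natCast, ← zpow_natCast, ← zpow_mul, ← zpow_mul, mul_comm]

theorem commute_iff_dvd (hζ : IsPrimitiveRoot ζ m) (hα0 : α ≠ 0)
    (hb : ∀ σ : K ≃ₐ[k] K, σ α = ζ ^ b σ * α) (hc : ∀ σ : K ≃ₐ[k] K, σ ζ = ζ ^ c σ)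
    (hext : ∀ σ τ : K ≃ₐ[k] K, σ ζ = τ ζ → σ α = τ α → σ = τ) (σ τ : K ≃ₐ[k] K) :
    σ * τ = τ * σ ↔ (m : ℤ) ∣ b τ * (c σ - 1) - b σ * (c τ - 1) := by
  have hζ0 : ζ ≠ 0 := hζ.ne_zero (NeZero.ne m)
  have hmul : ∀ σ τ : K ≃ₐ[k] K, (σ * τ) α = ζ ^ (c σ * b τ + b σ) * α := fun σ τ => by
    rw [AlgEquiv.mul_apply, hb, map_mul, map_zpow₀, hb, hc, ← zpow_mul, ← mul_assoc,
      ← zpow_add₀ hζ0]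
  have hζζ : (σ * τ) ζ = (τ * σ) ζ := by
    rw [AlgEquiv.mul_apply, AlgEquiv.mul_apply, hc, hc, map_zpow₀, map_zpow₀, hc, hc,
      ← zpow_mul, ← zpow_mul, mul_comm]
  have hexp : b τ * (c σ - 1) - b σ * (c τ - 1) = (c σ * b τ + b σ) - (c τ * b σ + b τ) := by
    ring
  rw [hexp, ← hζ.zpow_eq_zpow_iff_dvd, ← mul_left_inj' hα0, ← hmul, ← hmul]
  exact ⟨fun h => h ▸ rfl, hext _ _ hζζ⟩


theorem dvd_of_forall_dvd_sub_one [IsGalois k K] [FiniteDimensional k K]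
    (hζ : IsPrimitiveRoot ζ m) (hc : ∀ σ : K ≃ₐ[k] K, σ ζ = ζ ^ c σ) {ω : ℕ}
    (hω : ∀ y : k, y ^ m = 1 → y ^ ω = 1) {g : ℤ} (hgm : g ∣ m) (hgc : ∀ σ, g ∣ c σ - 1) :
    g ∣ ω := by
  obtain ⟨e, he⟩ := hgm
  have he0 : e ≠ 0 := by rintro rfl; exact NeZero.ne m (by exact_mod_cast he.trans (mul_zero g))
  have hfix : ∀ σ : K ≃ₐ[k] K, σ (ζ ^ e) = ζ ^ e := fun σ => by
    rw [map_zpow₀, hc, ← zpow_mul, hζ.zpow_eq_zpow_iff_dvd, he,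
      show c σ * e - e = (c σ - 1) * e by ring]
    exact mul_dvd_mul_right (hgc σ) e
  obtain ⟨y, hy⟩ := (IsGalois.mem_range_algebraMap_iff_fixed _).mpr hfix
  have hym : y ^ m = 1 := (algebraMap k K).injective <| by
    rw [map_pow, hy, map_one, ← zpow_natCast, ← zpow_mul, hζ.zpow_eq_one_iff_dvd]
    exact dvd_mul_left _ _
  have hyω := congrArg (algebraMap k K) (hω y hym)
  rw [map_pow, hy, map_one, ← zpow_natCast, ← zpow_mul, hζ.zpow_eq_one_iff_dvd, he, mul_comm e,
    mul_dvd_mul_iff_right he0] at hyω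
  exact hyω

theorem exists_algebraMap_pow_eq_of_dvd_cross [IsGalois k K] [FiniteDimensional k K]
    (hζ : IsPrimitiveRoot ζ m) (hb : ∀ σ : K ≃ₐ[k] K, σ α = ζ ^ b σ * α)
    (hc : ∀ σ : K ≃ₐ[k] K, σ ζ = ζ ^ c σ) {ω : ℕ} (hω : ∀ y : k, y ^ m = 1 → y ^ ω = 1)
    (hcross : ∀ σ τ : K ≃ₐ[k] K, (m : ℤ) ∣ b τ * (c σ - 1) - b σ * (c τ - 1)) :
    ∃ γ : k, algebraMap k K γ ^ m = (α ^ m) ^ ω := by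
  have hζ0 : ζ ≠ 0 := hζ.ne_zero (NeZero.ne m)
  obtain ⟨g, r, hgm, hgc, hr⟩ := Int.exists_dvd_sub_mul_of_dvd_cross m b (c · - 1) hcross
  obtain ⟨W, hW⟩ := dvd_of_forall_dvd_sub_one hζ hc hω hgm hgc
  have hfix : ∀ σ : K ≃ₐ[k] K, σ (α ^ ω * ζ ^ (-(W * r))) = α ^ ω * ζ ^ (-(W * r)) := by
    intro σ
    rw [map_mul, map_pow, map_zpow₀, hb, hc, mul_pow, ← zpow_natCast (ζ ^ b σ), ← zpow_mul,
      ← zpow_mul, mul_comm (ζ ^ _), mul_assoc, ← zpow_add₀ hζ0]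
    congr 1
    rw [hζ.zpow_eq_zpow_iff_dvd]
    obtain ⟨s, hs⟩ := hr σ
    exact ⟨-(W * s), by linear_combination (-W) * hs + b σ * hW⟩
  obtain ⟨γ, hγ⟩ := (IsGalois.mem_range_algebraMap_iff_fixed _).mpr hfix
  refine ⟨γ, ?_⟩
  rw [hγ, mul_pow, ← zpow_natCast (ζ ^ _), ← zpow_mul, (hζ.zpow_eq_one_iff_dvd _).mpr
    (dvd_mul_left _ _), mul_one, ← pow_mul, ← pow_mul, mul_comm]

theorem dvd_sub_one_of_isPrimitiveRoot (hζ : IsPrimitiveRoot ζ m)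
    (hc : ∀ σ : K ≃ₐ[k] K, σ ζ = ζ ^ c σ) {ω : ℕ} {η : k} (hη : IsPrimitiveRoot η ω)
    (hωm : ω ∣ m) (σ : K ≃ₐ[k] K) : (ω : ℤ) ∣ c σ - 1 := by
  have : NeZero ω := ⟨ne_zero_of_dvd_ne_zero (NeZero.ne m) hωm⟩
  have hη' := hη.map_of_injective (algebraMap k K).injective
  have hfix := apply_eq_zpow_of_pow_eq_one hζ hc σ (hη'.pow_eq_one_iff_dvd m |>.mpr hωm)
  rw [AlgEquiv.commutes] at hfix
  rw [← hη'.zpow_eq_zpow_iff_dvd, zpow_one, ← hfix]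

theorem dvd_cross_of_algebraMap_pow_eq (hζ : IsPrimitiveRoot ζ m) (hα0 : α ≠ 0)
    (hb : ∀ σ : K ≃ₐ[k] K, σ α = ζ ^ b σ * α) (hc : ∀ σ : K ≃ₐ[k] K, σ ζ = ζ ^ c σ) {ω : ℕ}
    (hω0 : ω ≠ 0) (hωm : ω ∣ m) (hωc : ∀ σ : K ≃ₐ[k] K, (ω : ℤ) ∣ c σ - 1) {γ : k}
    (hγ : algebraMap k K γ ^ m = (α ^ m) ^ ω) (σ τ : K ≃ₐ[k] K) :
    (m : ℤ) ∣ b τ * (c σ - 1) - b σ * (c τ - 1) := by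
  have hζ0 : ζ ≠ 0 := hζ.ne_zero (NeZero.ne m)
  have hγ0 : algebraMap k K γ ≠ 0 := by
    rintro h
    rw [h, zero_pow (NeZero.ne m)] at hγ
    exact pow_ne_zero _ (pow_ne_zero _ hα0) hγ.symm
  obtain ⟨t, ht⟩ := hζ.exists_zpow_mul_eq hγ0 (y := α ^ ω)
    (by rw [← pow_mul, mul_comm, pow_mul, hγ])
  have key : ∀ ρ : K ≃ₐ[k] K, (m : ℤ) ∣ ω * b ρ - t * (c ρ - 1) := fun ρ => by
    have hρ := congrArg ρ ht.symm
    rw [map_mul, map_zpow₀, hc, AlgEquiv.commutes, map_pow, hb, mul_pow, ht, ← mul_assoc,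
      ← zpow_natCast (ζ ^ b ρ), ← zpow_mul, ← zpow_mul, ← zpow_add₀ hζ0,
      mul_left_inj' hγ0, hζ.zpow_eq_zpow_iff_dvd] at hρ
    rwa [show (ω : ℤ) * b ρ - t * (c ρ - 1) = -(c ρ * t - (b ρ * ω + t)) by ring, dvd_neg]
  obtain ⟨d₁, hd₁⟩ := hωc σ
  obtain ⟨d₂, hd₂⟩ := hωc τ
  rw [hd₁, hd₂]
  exact Int.dvd_cross_of_dvd_sub_mul (by exact_mod_cast hω0) (by exact_mod_cast hωm)
    (hd₁ ▸ key σ) (hd₂ ▸ key τ)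

end Schinzel

/-- Schinzel's theorem: the Galois group of `x^m - a` over `k` is abelian iff
`a^{ω_m}` is an `m`-th power in `k`, where `ω_m` is the number of `m`-th roots
of unity in `k`. -/
theorem stmt_3 {k K : Type*} [Field k] [Field K] [Algebra k K] (m : ℕ)
    (hm0 : 0 < m) (hchar : ¬ (ringChar k ∣ m)) (a : k) (ha : a ≠ 0)
    (hsplit : Polynomial.IsSplittingField k K (X ^ m - C a)) :
    (∀ σ τ : K ≃ₐ[k] K, σ * τ = τ * σ) ↔
      ∃ γ : k, a ^ ((Polynomial.nthRoots m (1 : k)).toFinset.card) = γ ^ m := by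
  have : NeZero m := ⟨hm0.ne'⟩
  have hmk : (m : k) ≠ 0 := fun h => hchar ((ringChar.spec k m).mp h)
  have := IsSplittingField.finiteDimensional K (X ^ m - C a)
  have : IsGalois k K := IsGalois.of_separable_splitting_field (separable_X_pow_sub_C a hmk ha)
  obtain ⟨α, hα, ζ, hζ⟩ :=
    exists_pow_eq_and_isPrimitiveRoot_of_isSplittingField_X_pow_sub_C (K := K) hmk ha
  have hα0 : α ≠ 0 := by
    rintro rfl
    exact ha ((algebraMap k K).injective (by rw [← hα, zero_pow hm0.ne', map_zero]))
  choose b hb using fun σ : K ≃ₐ[k] K =>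
    hζ.exists_zpow_mul_eq hα0 (y := σ α) (by rw [← map_pow, hα, AlgEquiv.commutes])
  choose c hc using fun σ : K ≃ₐ[k] K =>
    hζ.exists_zpow_mul_eq one_ne_zero (y := σ ζ)
      (by rw [← map_pow, hζ.pow_eq_one, map_one, one_pow])
  simp only [mul_one] at hc
  have hωm := natCard_rootsOfUnity_dvd k m
  obtain ⟨η, hη⟩ := exists_isPrimitiveRoot_natCard_rootsOfUnity k m
  simp only [Schinzel.commute_iff_dvd hζ hα0 hb hc
    fun σ τ => AlgEquiv.ext_of_isSplittingField_X_pow_sub_C hζ hα hα0 (σ := σ) (τ := τ)]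
  rw [← natCard_rootsOfUnity_eq_card_toFinset_nthRoots]
  constructor
  · intro hcross
    obtain ⟨γ, hγ⟩ := Schinzel.exists_algebraMap_pow_eq_of_dvd_cross hζ hb hc
      (fun _ => pow_natCard_rootsOfUnity_eq_one) hcross
    exact ⟨γ, (algebraMap k K).injective (by rw [map_pow, map_pow, hγ, hα])⟩
  · rintro ⟨γ, hγ⟩
    exact Schinzel.dvd_cross_of_algebraMap_pow_eq hζ hα0 hb hc
      (ne_zero_of_dvd_ne_zero hm0.ne' hωm) hωm
      (Schinzel.dvd_sub_one_of_isPrimitiveRoot hζ hc hη hωm)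
      (by rw [hα, ← map_pow (algebraMap k K), ← map_pow (algebraMap k K), hγ])
end

section
/- If m is odd and a ∈ ℚ is not a p-th power in ℚ for every prime p dividing m, then x^m - a is irreducible over ℚ(ζ_m), and hence [ℚ(ζ_m, a^{1/m}) : ℚ] = φ(m)·m. -/
/-!
By Kummer's criterion for odd `m` (`X_pow_sub_C_irreducible_of_odd`) it suffices that `a` is not a
`p`-th power in `ℚ(ζ_m)` for any prime `p ∣ m`. If `b ^ p = a` there, then `ℚ(b)` has degree `p`
and is Galois over `ℚ`, because `ℚ(ζ_m)/ℚ` is abelian. So `X ^ p - a` splits in `ℚ(b)`, and the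
ratio of two of its roots is a primitive `p`-th root of unity in `ℚ(b)`: then `φ(p) = p - 1`
divides `p`, which is absurd for odd `p`. The degree follows from the tower
`ℚ ⊆ ℚ(ζ_m) ⊆ ℚ(ζ_m, α)`.
-/

open Polynomial IntermediateField

theorem IsPrimitiveRoot.isCyclotomicExtension_of_adjoin_eq_top {F K : Type*} [Field F] [Field K]
    [Algebra F K] {n : ℕ} [NeZero n] {ζ : K} (hζ : IsPrimitiveRoot ζ n) (h : F⟮ζ⟯ = ⊤) :
    IsCyclotomicExtension {n} F K := by
  have hint : IsIntegral F ζ := (hζ.isIntegral (NeZero.pos n)).tower_top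
  have htop : Algebra.adjoin F {ζ} = ⊤ := by
    rw [← adjoin_simple_toSubalgebra_of_isAlgebraic hint.isAlgebraic, h, top_toSubalgebra]
  refine (IsCyclotomicExtension.iff_singleton n F K).2 ⟨⟨ζ, hζ⟩, fun x => ?_⟩
  refine Algebra.adjoin_mono ?_ (htop ▸ Algebra.mem_top : x ∈ Algebra.adjoin F {ζ})
  simpa using hζ.pow_eq_one

theorem exists_isPrimitiveRoot_of_splits_X_pow_sub_C {E : Type*} [Field E] {p : ℕ}
    (hp : p.Prime) {a : E} (ha : a ≠ 0) (hsep : (X ^ p - C a).Separable)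
    (hsplit : (X ^ p - C a).Splits) : ∃ η : E, IsPrimitiveRoot η p := by
  classical
  have hcard : (X ^ p - C a).roots.toFinset.card = p := by
    rw [Multiset.toFinset_card_of_nodup (nodup_roots hsep), ← hsplit.natDegree_eq_card_roots,
      natDegree_X_pow_sub_C]
  obtain ⟨r, hr, s, hs, hrs⟩ := Finset.one_lt_card.mp (hcard ▸ hp.one_lt)
  have hpow : ∀ x ∈ (X ^ p - C a).roots.toFinset, x ^ p = a := fun x hx => by
    simpa [sub_eq_zero, (monic_X_pow_sub_C a hp.ne_zero).ne_zero] using hx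
  have hs0 : s ≠ 0 := by
    rintro rfl
    exact ha (by simpa [hp.ne_zero] using (hpow 0 hs).symm)
  refine ⟨r / s, isPrimitiveRoot_of_mem_nthRootsFinset hp ?_ ?_⟩
  · rw [mem_nthRootsFinset hp.pos, div_pow, hpow r hr, hpow s hs, div_self ha]
  · rwa [Ne, div_eq_one_iff_eq hs0]

theorem IsPrimitiveRoot.totient_dvd_finrank {F E : Type*} [Field F] [Field E] [Algebra F E]
    [FiniteDimensional F E] {n : ℕ} {η : E} (hη : IsPrimitiveRoot η n)
    (hirr : Irreducible (cyclotomic n F)) : n.totient ∣ Module.finrank F E := by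
  have : NeZero n := ⟨by rintro rfl; exact not_irreducible_one (cyclotomic_zero F ▸ hirr)⟩
  have := hη.neZero'
  have : NeZero (n : F) :=
    ⟨fun h => NeZero.ne (n : E) (by rw [← map_natCast (algebraMap F E), h, map_zero])⟩
  rw [← natDegree_cyclotomic n F, hη.minpoly_eq_cyclotomic_of_irreducible hirr]
  exact minpoly.degree_dvd (.of_finite F η)

theorem minpoly_eq_X_pow_sub_C_of_irreducible {K L : Type*} [Field K] [Field L] [Algebra K L]
    {n : ℕ} {a : K} (hirr : Irreducible (X ^ n - C a)) {α : L} (hα : α ^ n = algebraMap K L a) :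
    minpoly K α = X ^ n - C a :=
  (minpoly.eq_of_irreducible_of_monic hirr (by simp [hα])
    (monic_X_pow_sub_C a (ne_zero_of_irreducible_X_pow_sub_C hirr))).symm

theorem finrank_adjoin_eq_of_irreducible_X_pow_sub_C {K L : Type*} [Field K] [Field L]
    [Algebra K L] {n : ℕ} {a : K} (hirr : Irreducible (X ^ n - C a)) {α : L}
    (hα : α ^ n = algebraMap K L a) : Module.finrank K K⟮α⟯ = n := by
  have hint : IsIntegral K α :=
    ⟨_, monic_X_pow_sub_C a (ne_zero_of_irreducible_X_pow_sub_C hirr), by simp [hα]⟩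
  rw [adjoin.finrank hint, minpoly_eq_X_pow_sub_C_of_irreducible hirr hα, natDegree_X_pow_sub_C]

theorem pow_ne_algebraMap_of_isAbelianGalois {F K : Type*} [Field F] [Field K] [Algebra F K]
    [IsAbelianGalois F K] {p : ℕ} (hp : p.Prime) (hp2 : p ≠ 2)
    (hcyc : Irreducible (cyclotomic p F)) {a : F} (ha : ∀ c : F, c ^ p ≠ a) (b : K) :
    b ^ p ≠ algebraMap F K a := by
  intro hb
  have hirr : Irreducible (X ^ p - C a) := X_pow_sub_C_irreducible_of_prime hp ha
  have hdeg : Module.finrank F F⟮b⟯ = p := finrank_adjoin_eq_of_irreducible_X_pow_sub_C hirr hb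
  have : FiniteDimensional F F⟮b⟯ := Module.finite_of_finrank_pos (hdeg ▸ hp.pos)
  obtain ⟨η, hη⟩ : ∃ η : F⟮b⟯, IsPrimitiveRoot η p := by
    have hmin := minpoly_eq_X_pow_sub_C_of_irreducible hirr hb
    have hsep : (X ^ p - C a).Separable := hmin ▸ Algebra.IsSeparable.isSeparable F b
    have hsplit := Normal.splits (F := F) inferInstance (AdjoinSimple.gen F b)
    rw [minpoly_gen, hmin] at hsplit
    refine exists_isPrimitiveRoot_of_splits_X_pow_sub_C (a := algebraMap F F⟮b⟯ a) hp ?_ ?_ ?_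
    · simpa using ne_zero_of_irreducible_X_pow_sub_C' hp.ne_one hirr
    · simpa using hsep.map (f := algebraMap F F⟮b⟯)
    · simpa using hsplit
  have hdvd := hη.totient_dvd_finrank hcyc
  rw [Nat.totient_prime hp, hdeg] at hdvd
  have hunit : p - 1 ∣ 1 := by
    simpa [Nat.sub_sub_self hp.one_lt.le] using Nat.dvd_sub hdvd dvd_rfl
  have := Nat.le_of_dvd one_pos hunit
  have := hp.two_le
  omega

theorem stmt_5_general (m : ℕ) (hm : Odd m) (a : ℚ)
    (ha : ∀ p : ℕ, p.Prime → p ∣ m → ¬ ∃ b : ℚ, b ^ p = a)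
    {K : Type*} [Field K] [Algebra ℚ K] (ζ : K) (hζ : IsPrimitiveRoot ζ m)
    (hKgen : IntermediateField.adjoin ℚ ({ζ} : Set K) = ⊤)
    {L : Type*} [Field L] [Algebra ℚ L] [Algebra K L] [IsScalarTower ℚ K L]
    (α : L) (hα : α ^ m = algebraMap ℚ L a)
    (hLgen : IntermediateField.adjoin K ({α} : Set L) = ⊤) :
    Irreducible (X ^ m - C (algebraMap ℚ K a)) ∧
      Module.finrank ℚ L = Nat.totient m * m := by
  have : NeZero m := ⟨hm.pos.ne'⟩
  have : IsCyclotomicExtension {m} ℚ K := hζ.isCyclotomicExtension_of_adjoin_eq_top hKgen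
  have : IsAbelianGalois ℚ K := IsCyclotomicExtension.isAbelianGalois {m} ℚ K
  have hirr : Irreducible (X ^ m - C (algebraMap ℚ K a)) :=
    X_pow_sub_C_irreducible_of_odd hm fun p hp hpm =>
      pow_ne_algebraMap_of_isAbelianGalois hp (hm.ne_two_of_dvd_nat hpm)
        (cyclotomic.irreducible_rat hp.pos) fun c hc => ha p hp hpm ⟨c, hc⟩
  refine ⟨hirr, ?_⟩
  have hKL : Module.finrank K L = m := by
    rw [← finrank_top', ← hLgen]
    exact finrank_adjoin_eq_of_irreducible_X_pow_sub_C hirr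
      (by rw [hα, IsScalarTower.algebraMap_apply ℚ K L])
  rw [← Module.finrank_mul_finrank ℚ K L, hKL,
    IsCyclotomicExtension.finrank K (cyclotomic.irreducible_rat hm.pos)]

theorem stmt_5 (m : ℕ) (hm : Odd m) (hm0 : 0 < m) (a : ℚ)
    (ha : ∀ p : ℕ, p.Prime → p ∣ m → ¬ ∃ b : ℚ, b ^ p = a)
    {K : Type*} [Field K] [Algebra ℚ K] (ζ : K) (hζ : IsPrimitiveRoot ζ m)
    (hKgen : IntermediateField.adjoin ℚ ({ζ} : Set K) = ⊤)
    {L : Type*} [Field L] [Algebra ℚ L] [Algebra K L] [IsScalarTower ℚ K L]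
    (α : L) (hα : α ^ m = algebraMap ℚ L a)
    (hLgen : IntermediateField.adjoin K ({α} : Set L) = ⊤) :
    Irreducible (X ^ m - C (algebraMap ℚ K a)) ∧
      Module.finrank ℚ L = Nat.totient m * m :=
  stmt_5_general m hm a ha ζ hζ hKgen α hα hLgen
end

section
/- If x^m - a is irreducible over ℚ with m odd, then Gal(ℚ(ζ_m, a^{1/m})/ℚ) is isomorphic to the semidirect product (ℤ/mℤ) ⋊ (ℤ/mℤ)^×, where (ℤ/mℤ)^× acts on ℤ/mℤ by multiplication. -/
/-!
Fix a primitive `m`-th root of unity `ζ` and a root `α` of `X ^ m - a` in `K`. An automorphism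
`σ` is determined by `σ ζ = ζ ^ χ(σ)` and `σ α = ζ ^ s(σ) * α`, and `s` is a crossed homomorphism,
`s(στ) = s(σ) + χ(σ) s(τ)`, so `σ ↦ (s(σ), χ(σ))` embeds the Galois group in `ℤ/m ⋊ (ℤ/m)ˣ`.
The embedding is onto because `[K : ℚ] = φ(m) m`: the cyclotomic field `ℚ(ζ)` has degree `φ(m)`,
and `X ^ m - a` stays irreducible over it. Otherwise, `m` being odd, `a = b ^ p` for a prime
`p ∣ m` and some `b ∈ ℚ(ζ)`; since `ℚ(ζ)/ℚ` is abelian, `ℚ(b)` is Galois of degree `p` over `ℚ`,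
hence contains a primitive `p`-th root of unity, and `p - 1 ∣ p` is impossible for odd `p`.
-/

open Polynomial

/-- The action of `(ℤ/mℤ)ˣ` on `ℤ/mℤ` by multiplication, as a map into the
automorphisms of the (multiplicatively written) cyclic group of order `m`. -/
def holMap (m : ℕ) : (ZMod m)ˣ →* MulAut (Multiplicative (ZMod m)) where
  toFun u := AddEquiv.toMultiplicative (DistribMulAction.toAddAut (ZMod m)ˣ (ZMod m) u)
  map_one' := by ext x; simp
  map_mul' u v := by ext x; simp [mul_smul]

-- Otherwise an intermediate field of a `ℚ`-algebra carries two `ℚ`-algebra structures.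
attribute [-instance] DivisionRing.toRatAlgebra

open IntermediateField

theorem exists_isPrimitiveRoot_of_splits_X_pow_sub_one {L : Type*} [Field L] {n : ℕ}
    (hn : (n : L) ≠ 0) (hs : (X ^ n - 1 : L[X]).Splits) : ∃ ζ : L, IsPrimitiveRoot ζ n := by
  have : NeZero n := ⟨by rintro rfl; exact hn Nat.cast_zero⟩
  have hnodup : (nthRoots n (1 : L)).Nodup :=
    nodup_roots (by simpa using separable_X_pow_sub_C (1 : L) hn one_ne_zero)
  have hcard : Multiset.card (nthRoots n (1 : L)) = n := by
    rw [nthRoots, C_1, ← hs.natDegree_eq_card_roots, ← C_1, natDegree_X_pow_sub_C]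
  classical
  rw [← card_rootsOfUnity_eq_iff_exists_isPrimitiveRoot,
    Nat.card_congr ((rootsOfUnityEquivNthRoots L n).trans
      (Equiv.subtypeEquivRight fun _ => Multiset.mem_toFinset.symm)), Nat.card_eq_finsetCard,
    Multiset.toFinset_card_of_nodup hnodup, hcard]

theorem exists_isPrimitiveRoot_of_splits_X_pow_sub_C_s7 {F E : Type*} [Field F] [Field E]
    [Algebra F E] {n : ℕ} (hn : (n : E) ≠ 0) {a : F} (ha : a ≠ 0)
    (hs : ((X ^ n - C a).map (algebraMap F E)).Splits) : ∃ ζ : E, IsPrimitiveRoot ζ n :=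
  exists_isPrimitiveRoot_of_splits_X_pow_sub_one hn
    (by simpa using splits_X_pow_sub_one_of_X_pow_sub_C _ n ha hs)

namespace IsPrimitiveRoot

section PowVal

variable {K : Type*} [Field K] {m : ℕ} [NeZero m] {ζ : K} (hζ : IsPrimitiveRoot ζ m)
include hζ

theorem pow_eq_pow_iff_natCast_eq {i j : ℕ} : ζ ^ i = ζ ^ j ↔ (i : ZMod m) = j := by
  rw [(hζ.isOfFinOrder (NeZero.ne m)).pow_eq_pow_iff_modEq, ← hζ.eq_orderOf,
    ZMod.natCast_eq_natCast_iff]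

theorem pow_val_add (x y : ZMod m) : ζ ^ (x + y).val = ζ ^ x.val * ζ ^ y.val := by
  rw [← pow_add, hζ.pow_eq_pow_iff_natCast_eq]
  simp

theorem algEquiv_apply_pow_val {k : Type*} [Field k] [Algebra k K] (σ : K ≃ₐ[k] K)
    (x : ZMod m) : σ (ζ ^ x.val) = ζ ^ (hζ.autToPow k σ * x : ZMod m).val := by
  rw [map_pow, ← hζ.autToPow_spec k σ, ← pow_mul, hζ.pow_eq_pow_iff_natCast_eq]
  simp

theorem injective_pow_val_mul {α : K} (hα : α ≠ 0) :
    Function.Injective fun x : ZMod m => ζ ^ x.val * α := by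
  intro x y h
  simpa using hζ.pow_eq_pow_iff_natCast_eq.mp (mul_right_cancel₀ hα h)

theorem exists_pow_val_mul_eq {α r : K} (hα : α ≠ 0) (hr : r ^ m = α ^ m) :
    ∃ x : ZMod m, r = ζ ^ x.val * α := by
  obtain ⟨i, hi, hζi⟩ := hζ.eq_pow_of_pow_eq_one (ξ := r / α)
    (by rw [div_pow, hr, div_self (pow_ne_zero m hα)])
  exact ⟨i, by rw [ZMod.val_cast_of_lt hi, hζi, div_mul_cancel₀ r hα]⟩

end PowVal

theorem finrank_adjoin_rat {E : Type*} [Field E] [Algebra ℚ E] [Algebra.IsIntegral ℚ E]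
    {n : ℕ} [NeZero n] {ζ : E} (hζ : IsPrimitiveRoot ζ n) :
    Module.finrank ℚ ℚ⟮ζ⟯ = n.totient :=
  have := hζ.intermediateField_adjoin_isCyclotomicExtension ℚ
  IsCyclotomicExtension.finrank ℚ⟮ζ⟯ (cyclotomic.irreducible_rat (NeZero.pos n))

theorem totient_dvd_finrank_rat {E : Type*} [Field E] [Algebra ℚ E] [FiniteDimensional ℚ E]
    {n : ℕ} [NeZero n] {ζ : E} (hζ : IsPrimitiveRoot ζ n) :
    n.totient ∣ Module.finrank ℚ E :=
  hζ.finrank_adjoin_rat ▸ Dvd.intro _ (Module.finrank_mul_finrank ℚ ℚ⟮ζ⟯ E)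

end IsPrimitiveRoot

theorem irreducible_X_pow_sub_C_of_isAbelianGalois {F : Type*} [Field F] [Algebra ℚ F]
    [IsAbelianGalois ℚ F] {n : ℕ} (hn : Odd n) {a : ℚ} (hirr : Irreducible (X ^ n - C a)) :
    Irreducible (X ^ n - C (algebraMap ℚ F a)) := by
  refine X_pow_sub_C_irreducible_of_odd hn fun p hp hpn b hb => ?_
  have hirr_p : Irreducible (X ^ p - C a) := X_pow_sub_C_irreducible_of_prime hp
    (pow_ne_of_irreducible_X_pow_sub_C hirr hpn hp.ne_one)
  have ha : a ≠ 0 := by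
    rintro rfl
    simp only [map_zero, sub_zero] at hirr_p
    exact not_irreducible_pow hp.ne_one hirr_p
  have hb_min : minpoly ℚ b = X ^ p - C a := (minpoly.eq_of_irreducible_of_monic hirr_p
    (by simp [hb]) (monic_X_pow_sub_C a hp.ne_zero)).symm
  have hb_int : IsIntegral ℚ b := Algebra.IsIntegral.isIntegral b
  -- `ℚ⟮b⟯` is normal over `ℚ` because `Gal(F/ℚ)` is abelian
  have hsplit : ((X ^ p - C a).map (algebraMap ℚ ℚ⟮b⟯)).Splits := by
    rw [← hb_min, ← minpoly_gen ℚ b]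
    exact Normal.splits inferInstance _
  have := adjoin.finiteDimensional hb_int
  have : Fact p.Prime := ⟨hp⟩
  obtain ⟨ζ, hζ⟩ := exists_isPrimitiveRoot_of_splits_X_pow_sub_C_s7 (by simp [hp.ne_zero]) ha hsplit
  have hdvd := hζ.totient_dvd_finrank_rat
  rw [adjoin.finrank hb_int, hb_min, natDegree_X_pow_sub_C, Nat.totient_prime hp] at hdvd
  have hp_one : p - 1 = 1 := Nat.dvd_one.mp <| by
    simpa [Nat.sub_sub_self hp.one_lt.le] using Nat.dvd_sub hdvd dvd_rfl
  obtain rfl : p = 2 := by have := hp.two_le; omega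
  exact Nat.not_even_iff_odd.mpr hn (even_iff_two_dvd.mpr hpn)

theorem finrank_eq_totient_mul_of_isSplittingField_X_pow_sub_C {K : Type*} [Field K]
    [Algebra ℚ K] {m : ℕ} (hm : Odd m) {a : ℚ} (hirr : Irreducible (X ^ m - C a))
    [IsSplittingField ℚ K (X ^ m - C a)] {ζ : K} (hζ : IsPrimitiveRoot ζ m) :
    Module.finrank ℚ K = m.totient * m := by
  have : NeZero m := ⟨hm.pos.ne'⟩
  have := IsSplittingField.finiteDimensional K (X ^ m - C a)
  have := hζ.intermediateField_adjoin_isCyclotomicExtension ℚ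
  have := IsCyclotomicExtension.isAbelianGalois {m} ℚ ℚ⟮ζ⟯
  have : IsSplittingField ℚ⟮ζ⟯ K (X ^ m - C (algebraMap ℚ ℚ⟮ζ⟯ a)) := by
    have := IsSplittingField.map (K := ℚ⟮ζ⟯) (L := K) (X ^ m - C a)
    rwa [Polynomial.map_sub, Polynomial.map_pow, map_X, map_C] at this
  have hζ' : IsPrimitiveRoot (AdjoinSimple.gen ℚ ζ) m :=
    IsPrimitiveRoot.coe_submonoidClass_iff.mp hζ
  rw [← Module.finrank_mul_finrank ℚ ℚ⟮ζ⟯ K, hζ.finrank_adjoin_rat,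
    finrank_of_isSplittingField_X_pow_sub_C ⟨_, (mem_primitiveRoots hm.pos).mpr hζ'⟩
      (irreducible_X_pow_sub_C_of_isAbelianGalois hm hirr) K]

instance {N G : Type*} [Group N] [Group G] [Finite N] [Finite G] (φ : G →* MulAut N) :
    Finite (N ⋊[φ] G) :=
  Finite.of_equiv _ SemidirectProduct.equivProd.symm

theorem subsingleton_algEquiv_of_isSplittingField_X_pow_one_sub_C {k K : Type*} [Field k]
    [Field K] [Algebra k K] (a : k) [IsSplittingField k K (X ^ 1 - C a)] :
    Subsingleton (K ≃ₐ[k] K) :=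
  ⟨fun σ τ => AlgEquiv.coe_toAlgHom_injective
    (AlgHom.ext_of_adjoin_eq_top (IsSplittingField.adjoin_rootSet K (X ^ 1 - C a))
      fun r hr => by simp_all [mem_rootSet, sub_eq_zero])⟩

section KummerShift

variable {k K : Type*} [Field k] [Field K] [Algebra k K] {m : ℕ} [NeZero m] {ζ : K}
  (hζ : IsPrimitiveRoot ζ m) {α : K} (hα : α ≠ 0) {a : k} (hαa : α ^ m = algebraMap k K a)

noncomputable def kummerShift (σ : K ≃ₐ[k] K) : ZMod m :=
  (hζ.exists_pow_val_mul_eq (r := σ α) hα (by rw [← map_pow, hαa, σ.commutes])).choose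

theorem apply_eq_pow_kummerShift_mul (σ : K ≃ₐ[k] K) :
    σ α = ζ ^ (kummerShift hζ hα hαa σ).val * α :=
  (hζ.exists_pow_val_mul_eq (r := σ α) hα (by rw [← map_pow, hαa, σ.commutes])).choose_spec

theorem kummerShift_eq_of_apply_eq {σ : K ≃ₐ[k] K} {x : ZMod m} (h : σ α = ζ ^ x.val * α) :
    kummerShift hζ hα hαa σ = x :=
  hζ.injective_pow_val_mul hα ((apply_eq_pow_kummerShift_mul hζ hα hαa σ).symm.trans h)

theorem kummerShift_mul (σ τ : K ≃ₐ[k] K) :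
    kummerShift hζ hα hαa (σ * τ) =
      kummerShift hζ hα hαa σ + hζ.autToPow k σ * kummerShift hζ hα hαa τ := by
  refine kummerShift_eq_of_apply_eq hζ hα hαa ?_
  rw [AlgEquiv.mul_apply, apply_eq_pow_kummerShift_mul hζ hα hαa τ, map_mul,
    hζ.algEquiv_apply_pow_val, apply_eq_pow_kummerShift_mul hζ hα hαa σ, ← mul_assoc,
    ← hζ.pow_val_add, add_comm]

noncomputable def galToHolomorph :
    (K ≃ₐ[k] K) →* Multiplicative (ZMod m) ⋊[holMap m] (ZMod m)ˣ where
  toFun σ := ⟨.ofAdd (kummerShift hζ hα hαa σ), hζ.autToPow k σ⟩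
  map_one' := by
    ext
    · exact congrArg _ (kummerShift_eq_of_apply_eq hζ hα hαa (x := 0) (by simp))
    · simp
  map_mul' σ τ := by
    ext
    · exact congrArg _ (kummerShift_mul hζ hα hαa σ τ)
    · simp

theorem galToHolomorph_injective [IsSplittingField k K (X ^ m - C a)] :
    Function.Injective (galToHolomorph hζ hα hαa) := by
  refine (injective_iff_map_eq_one _).mpr fun σ hσ => ?_
  have hs : kummerShift hζ hα hαa σ = 0 := congrArg (fun g => g.left.toAdd) hσ
  have hχ : hζ.autToPow k σ = 1 := congrArg SemidirectProduct.right hσ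
  refine AlgEquiv.coe_toAlgHom_injective
    (AlgHom.ext_of_adjoin_eq_top (IsSplittingField.adjoin_rootSet K (X ^ m - C a)) ?_)
  intro r hr
  have hrm : r ^ m = α ^ m := by
    simpa [hαa, sub_eq_zero] using (mem_rootSet.mp hr).2
  obtain ⟨x, rfl⟩ := hζ.exists_pow_val_mul_eq hα hrm
  simp [hζ.algEquiv_apply_pow_val, apply_eq_pow_kummerShift_mul hζ hα hαa σ, hs, hχ]

end KummerShift

theorem stmt_7_general (m : ℕ) (hm : Odd m) (a : ℚ)
    (hirr : Irreducible (X ^ m - C a))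
    {K : Type*} [Field K] [Algebra ℚ K]
    (hsplit : Polynomial.IsSplittingField ℚ K (X ^ m - C a)) :
    Nonempty ((K ≃ₐ[ℚ] K) ≃* Multiplicative (ZMod m) ⋊[holMap m] (ZMod m)ˣ) := by
  rcases eq_or_ne a 0 with rfl | ha
  · obtain rfl : m = 1 := by
      by_contra hm1
      simp only [map_zero, sub_zero] at hirr
      exact not_irreducible_pow hm1 hirr
    have := subsingleton_algEquiv_of_isSplittingField_X_pow_one_sub_C (K := K) (0 : ℚ)
    have : Subsingleton (Multiplicative (ZMod 1) ⋊[holMap 1] (ZMod 1)ˣ) :=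
      SemidirectProduct.equivProd.subsingleton
    have := uniqueOfSubsingleton (1 : K ≃ₐ[ℚ] K)
    have := uniqueOfSubsingleton (1 : Multiplicative (ZMod 1) ⋊[holMap 1] (ZMod 1)ˣ)
    exact ⟨MulEquiv.ofUnique⟩
  have : NeZero m := ⟨hm.pos.ne'⟩
  have := charZero_of_injective_algebraMap (algebraMap ℚ K).injective
  have := IsSplittingField.finiteDimensional K (X ^ m - C a)
  have : IsGalois ℚ K := IsGalois.of_separable_splitting_field hirr.separable
  obtain ⟨ζ, hζ⟩ := exists_isPrimitiveRoot_of_splits_X_pow_sub_C_s7 (NeZero.ne (m : K)) ha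
    (IsSplittingField.splits K (X ^ m - C a))
  have hαa := rootOfSplitsXPowSubC_pow a K (n := m)
  have hα : rootOfSplitsXPowSubC hm.pos a K ≠ 0 := fun h => ha <| by
    rwa [h, zero_pow hm.pos.ne', eq_comm, map_eq_zero_iff _ (algebraMap ℚ K).injective] at hαa
  refine ⟨.ofBijective (galToHolomorph hζ hα hαa)
    ((Nat.bijective_iff_injective_and_card _).mpr ⟨galToHolomorph_injective hζ hα hαa, ?_⟩)⟩
  rw [IsGalois.card_aut_eq_finrank,
    finrank_eq_totient_mul_of_isSplittingField_X_pow_sub_C hm hirr hζ, SemidirectProduct.card,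
    Nat.card_eq_fintype_card, Nat.card_eq_fintype_card, Fintype.card_multiplicative, ZMod.card,
    ZMod.card_units_eq_totient, mul_comm]

theorem stmt_7 (m : ℕ) (hm : Odd m) (hm0 : 0 < m) (a : ℚ)
    (hirr : Irreducible (X ^ m - C a))
    {K : Type*} [Field K] [Algebra ℚ K]
    (hsplit : Polynomial.IsSplittingField ℚ K (X ^ m - C a)) :
    Nonempty ((K ≃ₐ[ℚ] K) ≃* Multiplicative (ZMod m) ⋊[holMap m] (ZMod m)ˣ) :=
  stmt_7_general m hm a hirr hsplit
end

section
/- For an odd prime p, the number of conjugacy classes of K(p^r) = ℤ/p^rℤ ⋊ (ℤ/p^rℤ)^× equals (p−1)p^{r−1} + (p^r − 1)/(p−1). -/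
/-- The holomorph `K(m) = C(m) ⋊ G(m)` of the cyclic group of order `m`. -/
abbrev Kgrp (m : ℕ) := Multiplicative (ZMod m) ⋊[holMap m] (ZMod m)ˣ

/-!
Conjugating `(a, u)` by `(c, v)` gives `(v a + (1 - u) c, u)`, so `(u, (a, 1 - u))`, with
`(a, 1 - u)` the ideal of `ℤ/p^r`, is a class invariant. The ideals of `ℤ/p^r` form the chain
`(p^j)` and generators of one principal ideal differ by a unit, which makes the invariant complete;
and every pair `(u, I)` with `1 - u ∈ I` occurs. Counting these pairs ideal by ideal, `I = (1)`
contributes all `φ(p^r)` units and `I = (p^j)`, `j ≥ 1`, the kernel of `(ℤ/p^r)ˣ → (ℤ/p^j)ˣ`,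
of order `p^(r-j)`; these kernels add up to `(p^r - 1)/(p - 1)`.
-/

theorem card_conjClasses_eq_card_range {G β : Type*} [Group G] (f : G → β)
    (hf : ∀ x y, IsConj x y ↔ f x = f y) :
    Nat.card (ConjClasses G) = Nat.card (Set.range f) := by
  have : IsConj.setoid G = Setoid.ker f := Setoid.ext hf
  exact Nat.card_congr ((Quotient.congrRight fun x y => by rw [this]).trans
    (Setoid.quotientKerEquivRange f))

namespace ZMod

instance (n : ℕ) : IsPrincipalIdealRing (ZMod n) :=
  .of_surjective (Int.castRingHom (ZMod n)) intCast_surjective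

theorem natCard_units_eq_totient (n : ℕ) [NeZero n] : Nat.card (ZMod n)ˣ = n.totient :=
  Nat.card_eq_fintype_card.trans (card_units_eq_totient n)

theorem ker_castHom {d n : ℕ} (h : d ∣ n) :
    RingHom.ker (castHom h (ZMod d)) = Ideal.span {(d : ZMod n)} := by
  ext x
  obtain ⟨k, rfl⟩ := intCast_surjective x
  rw [RingHom.mem_ker, map_intCast, intCast_zmod_eq_zero_iff_dvd, Ideal.mem_span_singleton]
  constructor
  · rintro ⟨l, rfl⟩
    exact ⟨l, by push_cast; rfl⟩
  · rintro ⟨y, hy⟩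
    have := congrArg (castHom h (ZMod d)) hy
    rwa [map_intCast, map_mul, map_natCast, natCast_self, zero_mul,
      intCast_zmod_eq_zero_iff_dvd] at this

theorem card_units_one_sub_mem_span_mul_totient {d n : ℕ} [NeZero n] (h : d ∣ n) :
    Nat.card {u : (ZMod n)ˣ // 1 - (u : ZMod n) ∈ Ideal.span {(d : ZMod n)}} * d.totient =
      n.totient := by
  have : NeZero d := ⟨fun hd => NeZero.ne n (Nat.eq_zero_of_zero_dvd (hd ▸ h))⟩
  have hker (u : (ZMod n)ˣ) :
      1 - (u : ZMod n) ∈ Ideal.span {(d : ZMod n)} ↔ u ∈ (unitsMap h).ker := by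
    rw [← ker_castHom h, RingHom.mem_ker, MonoidHom.mem_ker, map_sub, map_one, sub_eq_zero,
      ← Units.val_inj, unitsMap_val, Units.val_one, castHom_apply, eq_comm]
  rw [Nat.card_congr (Equiv.subtypeEquivRight hker), ← natCard_units_eq_totient,
    ← natCard_units_eq_totient, ← (unitsMap h).ker.card_mul_index, Subgroup.index_ker,
    MonoidHom.range_eq_top.mpr (unitsMap_surjective h), Subgroup.card_top]

section PrimePow

variable {p r : ℕ}

theorem exists_eq_unit_mul_prime_pow (hp : p.Prime) (a : ZMod (p ^ r)) :
    ∃ w : (ZMod (p ^ r))ˣ, ∃ t ≤ r, a = w * (p ^ t : ℕ) := by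
  obtain ⟨d, hd, u, hu, rfl⟩ := eq_unit_mul_divisor a
  obtain ⟨t, ht, rfl⟩ := (Nat.dvd_prime_pow hp).mp hd
  exact ⟨hu.unit, t, ht, rfl⟩

theorem dvd_total_of_prime_pow (hp : p.Prime) (a b : ZMod (p ^ r)) : a ∣ b ∨ b ∣ a := by
  obtain ⟨v, s, -, rfl⟩ := exists_eq_unit_mul_prime_pow hp a
  obtain ⟨w, t, -, rfl⟩ := exists_eq_unit_mul_prime_pow hp b
  simp only [Units.mul_left_dvd, Units.dvd_mul_left]
  exact (le_total s t).imp (fun h => Nat.cast_dvd_cast (pow_dvd_pow p h))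
    (fun h => Nat.cast_dvd_cast (pow_dvd_pow p h))

theorem natCast_prime_pow_mem_span_iff (hp : p.Prime) {s : ℕ} (hs : s ≤ r) (t : ℕ) :
    ((p ^ t : ℕ) : ZMod (p ^ r)) ∈ Ideal.span {((p ^ s : ℕ) : ZMod (p ^ r))} ↔ s ≤ t := by
  rw [← ker_castHom (pow_dvd_pow p hs), RingHom.mem_ker, map_natCast, natCast_eq_zero_iff,
    Nat.pow_dvd_pow_iff_le_right hp.one_lt]

theorem span_natCast_prime_pow_injOn (hp : p.Prime) :
    Set.InjOn (fun t => Ideal.span {((p ^ t : ℕ) : ZMod (p ^ r))}) (Set.Iic r) := by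
  intro s hs t ht hst
  have hts := Ideal.mem_span_singleton_self ((p ^ t : ℕ) : ZMod (p ^ r))
  have hst' := Ideal.mem_span_singleton_self ((p ^ s : ℕ) : ZMod (p ^ r))
  simp only at hst
  rw [← hst, natCast_prime_pow_mem_span_iff hp hs] at hts
  rw [hst, natCast_prime_pow_mem_span_iff hp ht] at hst'
  exact le_antisymm hts hst'

theorem exists_eq_span_natCast_prime_pow (hp : p.Prime) (I : Ideal (ZMod (p ^ r))) :
    ∃ t ≤ r, I = Ideal.span {((p ^ t : ℕ) : ZMod (p ^ r))} := by
  obtain ⟨a, rfl⟩ := IsPrincipalIdealRing.principal I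
  obtain ⟨w, t, ht, rfl⟩ := exists_eq_unit_mul_prime_pow hp a
  exact ⟨t, ht, Ideal.span_singleton_mul_left_unit w.isUnit _⟩

theorem bijective_span_natCast_prime_pow (hp : p.Prime) :
    Function.Bijective fun t : Fin (r + 1) => Ideal.span {((p ^ (t : ℕ) : ℕ) : ZMod (p ^ r))} := by
  refine ⟨fun s t hst => Fin.ext ?_, fun I => ?_⟩
  · exact span_natCast_prime_pow_injOn hp (Nat.lt_succ_iff.mp s.2) (Nat.lt_succ_iff.mp t.2) hst
  · obtain ⟨t, ht, rfl⟩ := exists_eq_span_natCast_prime_pow hp I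
    exact ⟨⟨t, Nat.lt_succ_of_le ht⟩, rfl⟩

theorem exists_unit_mul_eq_of_span_eq (hp : p.Prime) {a b : ZMod (p ^ r)}
    (h : Ideal.span {a} = Ideal.span {b}) : ∃ v : (ZMod (p ^ r))ˣ, b = v * a := by
  obtain ⟨v, s, hs, rfl⟩ := exists_eq_unit_mul_prime_pow hp a
  obtain ⟨w, t, ht, rfl⟩ := exists_eq_unit_mul_prime_pow hp b
  rw [Ideal.span_singleton_mul_left_unit v.isUnit,
    Ideal.span_singleton_mul_left_unit w.isUnit] at h
  obtain rfl := span_natCast_prime_pow_injOn hp hs ht h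
  exact ⟨w * v⁻¹, by rw [Units.val_mul, mul_assoc, Units.inv_mul_cancel_left]⟩

theorem exists_eq_unit_mul_add_mul_of_span_pair_eq (hp : p.Prime) {a a' c : ZMod (p ^ r)}
    (h : Ideal.span {a, c} = Ideal.span {a', c}) :
    ∃ (v : (ZMod (p ^ r))ˣ) (b : ZMod (p ^ r)), a' = v * a + c * b := by
  by_cases hca : c ∣ a
  · have hca' : c ∣ a' := by
      rw [← Ideal.mem_span_singleton, ← Ideal.span_pair_eq_span_right_iff_dvd.mpr hca, h]
      exact Ideal.subset_span (Set.mem_insert _ _)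
    obtain ⟨b, hb⟩ := dvd_sub hca' hca
    exact ⟨1, b, by rw [← hb, Units.val_one]; ring⟩
  · have hac : a ∣ c := (dvd_total_of_prime_pow hp a c).resolve_right hca
    have ha'c : a' ∣ c := by
      refine (dvd_total_of_prime_pow hp a' c).resolve_right fun hca' => hca ?_
      rw [← Ideal.mem_span_singleton, ← Ideal.span_pair_eq_span_right_iff_dvd.mpr hca', ← h]
      exact Ideal.subset_span (Set.mem_insert _ _)
    rw [Ideal.span_pair_eq_span_left_iff_dvd.mpr hac,
      Ideal.span_pair_eq_span_left_iff_dvd.mpr ha'c] at h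
    obtain ⟨v, hv⟩ := exists_unit_mul_eq_of_span_eq hp h
    exact ⟨v, 0, by rw [hv, mul_zero, add_zero]⟩

theorem card_units_one_sub_mem_span_prime_pow_succ (hp : p.Prime) {t : ℕ} (ht : t < r) :
    Nat.card {u : (ZMod (p ^ r))ˣ //
        1 - (u : ZMod (p ^ r)) ∈ Ideal.span {((p ^ (t + 1) : ℕ) : ZMod (p ^ r))}} =
      p ^ (r - 1 - t) := by
  have : NeZero (p ^ r) := ⟨pow_ne_zero r hp.ne_zero⟩
  have h := card_units_one_sub_mem_span_mul_totient (pow_dvd_pow p (Nat.succ_le_of_lt ht))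
  rw [Nat.totient_prime_pow_succ hp, Nat.totient_prime_pow hp (by omega),
    show r - 1 = r - 1 - t + t by omega, pow_add, mul_assoc] at h
  exact Nat.eq_of_mul_eq_mul_right (mul_pos (pow_pos hp.pos t) (Nat.sub_pos_of_lt hp.one_lt)) h

theorem card_units_prod_ideal_one_sub_mem (hp : p.Prime) (hr : 1 ≤ r) :
    Nat.card {x : (ZMod (p ^ r))ˣ × Ideal (ZMod (p ^ r)) // 1 - (x.1 : ZMod (p ^ r)) ∈ x.2} =
      (p - 1) * p ^ (r - 1) + (p ^ r - 1) / (p - 1) := by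
  have : NeZero (p ^ r) := ⟨pow_ne_zero r hp.ne_zero⟩
  let e := Equiv.ofBijective _ (bijective_span_natCast_prime_pow (r := r) hp)
  have hsum : Nat.card {x : (ZMod (p ^ r))ˣ × Ideal (ZMod (p ^ r)) //
      1 - (x.1 : ZMod (p ^ r)) ∈ x.2} =
      ∑ t : Fin (r + 1), Nat.card {u : (ZMod (p ^ r))ˣ // 1 - (u : ZMod (p ^ r)) ∈ e t} := by
    rw [← Nat.card_sigma]
    exact Nat.card_congr (((Equiv.prodComm _ _).subtypeEquiv fun _ => Iff.rfl).trans
      ((Equiv.subtypeProdEquivSigmaSubtype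
        fun I (u : (ZMod (p ^ r))ˣ) => 1 - (u : ZMod (p ^ r)) ∈ I).trans
      (Equiv.sigmaCongrLeft e).symm))
  have h0 : e 0 = ⊤ := by simp [e, Ideal.span_singleton_one]
  have hsucc (i : Fin r) :
      Nat.card {u : (ZMod (p ^ r))ˣ // 1 - (u : ZMod (p ^ r)) ∈ e i.succ} = p ^ (r - 1 - i) :=
    card_units_one_sub_mem_span_prime_pow_succ hp i.2
  rw [hsum, Fin.sum_univ_succ]
  simp only [h0, Submodule.mem_top, Nat.card_congr (Equiv.subtypeUnivEquiv fun _ => trivial),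
    hsucc]
  rw [Fin.sum_univ_eq_sum_range (fun i => p ^ (r - 1 - i)), Finset.sum_range_reflect (p ^ ·),
    Nat.geomSum_eq hp.two_le, natCard_units_eq_totient, Nat.totient_prime_pow hp hr, mul_comm]

end PrimePow

end ZMod

namespace Kgrp

open Multiplicative

variable {m : ℕ}

theorem holMap_apply (u : (ZMod m)ˣ) (a : Multiplicative (ZMod m)) :
    holMap m u a = ofAdd (u * toAdd a) :=
  rfl

theorem mul_mul_inv (c x : Kgrp m) :
    c * x * c⁻¹ = ⟨ofAdd (c.right * toAdd x.left + (1 - x.right) * toAdd c.left), x.right⟩ := by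
  ext
  · simp only [SemidirectProduct.mul_left, SemidirectProduct.inv_left,
      SemidirectProduct.mul_right, holMap_apply, toAdd_mul, toAdd_ofAdd, toAdd_inv, Units.val_mul]
    linear_combination (-(x.right * toAdd c.left : ZMod m)) * c.right.mul_inv
  · simp [mul_comm c.right]

theorem isConj_iff {x y : Kgrp m} :
    IsConj x y ↔ y.right = x.right ∧
      ∃ (v : (ZMod m)ˣ) (b : ZMod m), toAdd y.left = v * toAdd x.left + (1 - x.right) * b := by
  rw [_root_.isConj_iff]
  constructor
  · rintro ⟨c, rfl⟩
    rw [mul_mul_inv]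
    exact ⟨rfl, c.right, toAdd c.left, rfl⟩
  · rintro ⟨h, v, b, hy⟩
    refine ⟨⟨ofAdd b, v⟩, ?_⟩
    rw [mul_mul_inv]
    exact SemidirectProduct.ext (toAdd.injective hy.symm) h.symm

def conjInvariant (m : ℕ) (g : Kgrp m) : (ZMod m)ˣ × Ideal (ZMod m) :=
  (g.right, Ideal.span {toAdd g.left, 1 - (g.right : ZMod m)})

theorem conjInvariant_eq_of_isConj {x y : Kgrp m} (h : IsConj x y) :
    conjInvariant m x = conjInvariant m y := by
  obtain ⟨hr, v, b, hl⟩ := isConj_iff.mp h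
  refine Prod.ext hr.symm ?_
  simp only [conjInvariant, hl, hr]
  rw [Ideal.span_pair_add_right_mul, Ideal.span_insert, Ideal.span_insert,
    Ideal.span_singleton_mul_left_unit v.isUnit]

theorem isConj_iff_conjInvariant_eq {p r : ℕ} (hp : p.Prime) (x y : Kgrp (p ^ r)) :
    IsConj x y ↔ conjInvariant (p ^ r) x = conjInvariant (p ^ r) y := by
  refine ⟨conjInvariant_eq_of_isConj, fun h => ?_⟩
  obtain ⟨hr, hl⟩ := Prod.ext_iff.mp h
  simp only [conjInvariant] at hr hl
  rw [← hr] at hl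
  exact isConj_iff.mpr ⟨hr.symm, ZMod.exists_eq_unit_mul_add_mul_of_span_pair_eq hp hl⟩

theorem range_conjInvariant :
    Set.range (conjInvariant m) = {x | 1 - (x.1 : ZMod m) ∈ x.2} := by
  ext ⟨u, I⟩
  constructor
  · rintro ⟨g, hg⟩
    rw [← hg]
    exact Ideal.subset_span (Set.mem_insert_of_mem _ rfl)
  · intro hu
    obtain ⟨a, rfl⟩ := IsPrincipalIdealRing.principal I
    exact ⟨⟨ofAdd a, u⟩,
      Prod.ext rfl (Ideal.span_pair_eq_span_left_iff_dvd.mpr (Ideal.mem_span_singleton.mp hu))⟩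

end Kgrp

theorem stmt_9_general (p r : ℕ) (hp : p.Prime) (hr : 1 ≤ r) :
    Nat.card (ConjClasses (Kgrp (p ^ r))) =
      (p - 1) * p ^ (r - 1) + (p ^ r - 1) / (p - 1) := by
  rw [card_conjClasses_eq_card_range _ (Kgrp.isConj_iff_conjInvariant_eq hp),
    Kgrp.range_conjInvariant]
  exact ZMod.card_units_prod_ideal_one_sub_mem hp hr

theorem stmt_9 (p r : ℕ) (hp : p.Prime) (hodd : Odd p) (hr : 1 ≤ r) :
    Nat.card (ConjClasses (Kgrp (p ^ r))) =
      (p - 1) * p ^ (r - 1) + (p ^ r - 1) / (p - 1) :=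
  stmt_9_general p r hp hr
end

section
/- Let K be a number field, a ∈ O_K, n ≥ 1, and L = K(a^{1/n}). If a prime ideal 𝔭 of O_K does not divide (na), then 𝔭 is unramified in L. -/
/-!
If `x` generates `L/K` and `f(x) = 0` with `f ∈ A[X]`, then the minimal polynomial of `x` divides
`f`, so `f'(x)` is a multiple of `minpoly'(x)` and lies in the different ideal. For
`f = X ^ n - a` this gives `n x ^ (n - 1) ∈ 𝔇`, hence `n a = n x ^ n ∈ 𝔇`. A prime `P` above
`𝔭 ∌ n a` therefore does not divide the different, whereas `P ^ (e - 1)` always does; so `e = 1`.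
-/

open NumberField IntermediateField Polynomial

section Different

variable {A K L B : Type*} [CommRing A] [Field K] [CommRing B] [Field L]
  [Algebra A K] [Algebra B L] [Algebra A B] [Algebra K L] [Algebra A L]
  [IsScalarTower A K L] [IsScalarTower A B L] [IsDomain A] [IsFractionRing A K]
  [FiniteDimensional K L] [Algebra.IsSeparable K L] [IsIntegralClosure B A L]
  [IsIntegrallyClosed A] [IsDedekindDomain B] [Module.IsTorsionFree A B]

lemma aeval_derivative_mem_differentIdeal_of_aeval_eq_zero {x : B}
    (hx : Algebra.adjoin K {algebraMap B L x} = ⊤) {f : A[X]} (hf : aeval x f = 0) :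
    aeval x (derivative f) ∈ differentIdeal A B := by
  have hxA : IsIntegral A x := IsIntegralClosure.isIntegral A L x
  obtain ⟨g, rfl⟩ := minpoly.isIntegrallyClosed_dvd hxA hf
  rw [derivative_mul, map_add, map_mul, map_mul, minpoly.aeval, zero_mul, add_zero]
  exact Ideal.mul_mem_right _ _ (aeval_derivative_mem_differentIdeal A K L x hx)

lemma algebraMap_natCast_mul_mem_differentIdeal_of_pow_eq {x : B}
    (hx : Algebra.adjoin K {algebraMap B L x} = ⊤) {n : ℕ} {a : A}
    (hxa : x ^ n = algebraMap A B a) :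
    algebraMap A B (n * a) ∈ differentIdeal A B := by
  rcases n with _ | m
  · simp
  have hroot : aeval x (X ^ (m + 1) - C a) = 0 := by simp [hxa]
  have hderiv := aeval_derivative_mem_differentIdeal_of_aeval_eq_zero hx hroot
  simp only [derivative_sub, derivative_X_pow, derivative_C, sub_zero, map_mul, map_pow,
    aeval_X, map_natCast, Nat.add_sub_cancel] at hderiv
  have := Ideal.mul_mem_right x _ hderiv
  rwa [mul_assoc, ← pow_succ, hxa, ← map_natCast (algebraMap A B), ← map_mul] at this

end Different

section Ramification

attribute [local instance] FractionRing.liftAlgebra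

lemma Ideal.ramificationIdx'_eq_one_of_not_dvd_differentIdeal {A B : Type*} [CommRing A]
    [CommRing B] [Algebra A B] [IsDedekindDomain A] [IsDedekindDomain B]
    [Module.IsTorsionFree A B] [Module.Finite A B]
    [Algebra.IsSeparable (FractionRing A) (FractionRing B)] {p : Ideal A} (hp : p ≠ ⊥)
    (P : Ideal B) [P.IsPrime] [P.LiesOver p] (hP : ¬ P ∣ differentIdeal A B) :
    p.ramificationIdx' P = 1 := by
  have : p.IsMaximal := (Ideal.isPrime_of_liesOver P p).isMaximal hp
  have hne : p.ramificationIdx' P ≠ 0 :=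
    Ideal.IsDedekindDomain.ramificationIdx'_ne_zero_of_liesOver P hp
  have hdvd : P ^ (p.ramificationIdx' P - 1) ∣ differentIdeal A B :=
    pow_sub_one_dvd_differentIdeal A P _ hp (Ideal.dvd_iff_le.mpr Ideal.le_pow_ramificationIdx')
  by_contra hne1
  exact hP ((dvd_pow_self P (by omega)).trans hdvd)

end Ramification

theorem stmt_12_general {K L : Type*} [Field K] [NumberField K] [Field L] [NumberField L]
    [Algebra K L] (n : ℕ) (a : 𝓞 K)
    (α : L) (hα : α ^ n = algebraMap K L (a : K))
    (hgen : IntermediateField.adjoin K ({α} : Set L) = ⊤)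
    (𝔭 : Ideal (𝓞 K)) [𝔭.IsPrime] (hbot : 𝔭 ≠ ⊥)
    (hnd : (n : 𝓞 K) * a ∉ 𝔭)
    (P : Ideal (𝓞 L)) [P.IsPrime]
    (hP : Ideal.comap (algebraMap (𝓞 K) (𝓞 L)) P = 𝔭) :
    Ideal.ramificationIdx' 𝔭 P = 1 := by
  have hn : 0 < n := Nat.pos_of_ne_zero (by rintro rfl; simp at hnd)
  have hαint : IsIntegral ℤ α :=
    .of_pow hn (hα ▸ a.2.map (IsScalarTower.toAlgHom ℤ K L))
  set β : 𝓞 L := ⟨α, hαint⟩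
  have hβ : β ^ n = algebraMap (𝓞 K) (𝓞 L) a := RingOfIntegers.ext hα
  have hadj : Algebra.adjoin K {algebraMap (𝓞 L) L β} = ⊤ := by
    change Algebra.adjoin K {α} = ⊤
    rw [← adjoin_simple_toSubalgebra_of_isAlgebraic (hαint.tower_top (A := K)).isAlgebraic,
      hgen, top_toSubalgebra]
  have : P.LiesOver 𝔭 := ⟨hP.symm⟩
  refine Ideal.ramificationIdx'_eq_one_of_not_dvd_differentIdeal hbot P fun hdvd ↦ hnd ?_
  rw [← hP, Ideal.mem_comap]
  exact Ideal.le_of_dvd hdvd (algebraMap_natCast_mul_mem_differentIdeal_of_pow_eq hadj hβ)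

theorem stmt_12 {K L : Type*} [Field K] [NumberField K] [Field L] [NumberField L]
    [Algebra K L] (n : ℕ) (hn : 1 ≤ n) (a : 𝓞 K) (ha : a ≠ 0)
    (α : L) (hα : α ^ n = algebraMap K L (a : K))
    (hgen : IntermediateField.adjoin K ({α} : Set L) = ⊤)
    (𝔭 : Ideal (𝓞 K)) [𝔭.IsPrime] (hbot : 𝔭 ≠ ⊥)
    (hnd : (n : 𝓞 K) * a ∉ 𝔭)
    (P : Ideal (𝓞 L)) [P.IsPrime]
    (hP : Ideal.comap (algebraMap (𝓞 K) (𝓞 L)) P = 𝔭) :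
    Ideal.ramificationIdx' 𝔭 P = 1 :=
  stmt_12_general n a α hα hgen 𝔭 hbot hnd P hP
end

section
/- Let p be a prime and a ∈ ℤ_p with p ∤ a. Then a is a p^r-th power in ℚ_p if and only if p^{r+1} divides a^{p−1} − 1. Moreover, for 0 < s ≤ r, a ∈ ℚ_p^{p^{r−s}} \ ℚ_p^{p^{r−s+1}} if and only if v_p(a^{p−1} − 1) = r − s + 1. -/
/-!
Put `c = a ^ (p - 1)`, so `c ≡ 1 [mod p]`. Since `p - 1` is prime to `p ^ r`, `a` is a
`p ^ r`-th power in `ℚ_[p]` iff `c` is, and any such root lies in `ℤ_[p]`. On `1 + pℤ_[p]`,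
raising to the `p`-th power raises the `p`-adic valuation of `x - 1` by exactly one (lifting the
exponent, `p` odd), and Hensel's lemma shows that every element of `1 + p²ℤ_[p]` is a `p`-th
power. By induction on `r`, the `p ^ r`-th powers in `1 + pℤ_[p]` are exactly
`1 + p^(r+1)ℤ_[p]`; the second claim compares this criterion for `r - s` and `r - s + 1`.
-/

theorem cube_dvd_one_add_mul_pow_sub {R : Type*} [CommRing R] {p : ℕ} (hp : Odd p) (w : R) :
    (p : R) ^ 3 ∣ (1 + p * w) ^ p - 1 - p ^ 2 * w := by
  obtain ⟨t, ht⟩ := odd_sq_dvd_geom_sum₂_sub (1 : R) w hp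
  have hgeom := geom_sum₂_mul (1 + p * w : R) 1 p
  simp only [one_pow, mul_one] at ht hgeom
  refine ⟨t * w, ?_⟩
  rw [← hgeom, sub_eq_iff_eq_add.mp ht]
  ring

namespace PadicInt

variable {p : ℕ} [Fact p.Prime]

theorem p_dvd_iff_toZMod_eq_zero (x : ℤ_[p]) : (p : ℤ_[p]) ∣ x ↔ toZMod x = 0 := by
  rw [← RingHom.mem_ker, ker_toZMod, maximalIdeal_eq_span_p, Ideal.mem_span_singleton]

theorem p_dvd_pow_sub_one_sub_one_of_not_dvd {a : ℤ_[p]} (ha : ¬ (p : ℤ_[p]) ∣ a) :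
    (p : ℤ_[p]) ∣ a ^ (p - 1) - 1 := by
  rw [p_dvd_iff_toZMod_eq_zero] at ha ⊢
  rw [map_sub, map_pow, map_one, ZMod.pow_card_sub_one_eq_one ha, sub_self]

theorem p_dvd_sub_one_of_p_dvd_pow_sub_one {z : ℤ_[p]} (hz : (p : ℤ_[p]) ∣ z ^ p - 1) :
    (p : ℤ_[p]) ∣ z - 1 := by
  simpa [p_dvd_iff_toZMod_eq_zero, ZMod.pow_card] using hz

theorem not_p_dvd_of_p_dvd_sub_one {e : ℤ_[p]} (he : (p : ℤ_[p]) ∣ e - 1) :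
    ¬ (p : ℤ_[p]) ∣ e := fun h =>
  prime_p.not_dvd_one ((dvd_iff_dvd_of_dvd_sub he).mp h)

theorem pow_succ_dvd_pow_sub_one_iff (hp : Odd p) {e : ℤ_[p]} (he : (p : ℤ_[p]) ∣ e - 1)
    (n : ℕ) : (p : ℤ_[p]) ^ (n + 1) ∣ e ^ p - 1 ↔ (p : ℤ_[p]) ^ n ∣ e - 1 := by
  have lte := emultiplicity_pow_prime_sub_pow_prime prime_p hp (y := 1) he
    (not_p_dvd_of_p_dvd_sub_one he)
  rw [one_pow] at lte
  rw [pow_dvd_iff_le_emultiplicity, pow_dvd_iff_le_emultiplicity, lte, Nat.cast_add,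
    Nat.cast_one, ENat.add_le_add_iff_right ENat.one_ne_top]

theorem norm_le_of_dvd {x y : ℤ_[p]} (h : x ∣ y) : ‖y‖ ≤ ‖x‖ := by
  obtain ⟨z, rfl⟩ := h
  simpa [norm_mul] using mul_le_mul_of_nonneg_left (norm_le_one z) (norm_nonneg x)

theorem norm_eq_one_of_p_dvd_sub_one {e : ℤ_[p]} (he : (p : ℤ_[p]) ∣ e - 1) : ‖e‖ = 1 :=
  (norm_le_one e).antisymm <| not_lt.mp fun h =>
    not_p_dvd_of_p_dvd_sub_one he ((norm_lt_one_iff_dvd e).mp h)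

theorem exists_pow_eq_of_sq_dvd_sub_one (hp : Odd p) {c : ℤ_[p]}
    (hc : (p : ℤ_[p]) ^ 2 ∣ c - 1) : ∃ e : ℤ_[p], e ^ p = c := by
  obtain ⟨w, hw⟩ := hc
  set F : Polynomial ℤ_[p] := Polynomial.X ^ p - Polynomial.C c
  -- Hensel's lemma needs an approximate root modulo `p ^ 3`, and `1` is only one modulo `p ^ 2`.
  set e₀ : ℤ_[p] := 1 + p * w
  have hF : F.aeval e₀ = (1 + p * w) ^ p - 1 - p ^ 2 * w := by
    simp [F, e₀, eq_add_of_sub_eq hw]; ring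
  have hF' : F.derivative.aeval e₀ = p * e₀ ^ (p - 1) := by
    simp [F, Polynomial.derivative_X_pow]
  have he₀ : ‖e₀‖ = 1 := norm_eq_one_of_p_dvd_sub_one ⟨w, by ring⟩
  have hnorm : ‖F.aeval e₀‖ < ‖F.derivative.aeval e₀‖ ^ 2 := by
    have hp_pos : 0 < ‖(p : ℤ_[p])‖ := by simp [norm_p, (Fact.out : p.Prime).pos]
    calc ‖F.aeval e₀‖ ≤ ‖(p : ℤ_[p])‖ ^ 3 := by
          rw [hF, ← norm_pow]; exact norm_le_of_dvd (cube_dvd_one_add_mul_pow_sub hp w)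
      _ < ‖(p : ℤ_[p])‖ ^ 2 := pow_lt_pow_right_of_lt_one₀ hp_pos
          ((norm_lt_one_iff_dvd _).mpr dvd_rfl) (by norm_num)
      _ = ‖F.derivative.aeval e₀‖ ^ 2 := by
          rw [hF', norm_mul, norm_pow, he₀, one_pow, mul_one]
  obtain ⟨e, he, -⟩ := hensels_lemma hnorm
  exact ⟨e, by simpa [F, sub_eq_zero] using he⟩

theorem exists_pow_p_pow_eq_iff (hp : Odd p) (m : ℕ) {c : ℤ_[p]}
    (hc : (p : ℤ_[p]) ∣ c - 1) :
    (∃ d : ℤ_[p], d ^ p ^ m = c) ↔ (p : ℤ_[p]) ^ (m + 1) ∣ c - 1 := by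
  induction m generalizing c with
  | zero => simpa using hc
  | succ m ih =>
    constructor
    · rintro ⟨d, rfl⟩
      have hd : (p : ℤ_[p]) ∣ d ^ p ^ m - 1 :=
        p_dvd_sub_one_of_p_dvd_pow_sub_one (by rwa [← pow_mul, ← pow_succ])
      rw [pow_succ (p : ℕ) m, pow_mul, pow_succ_dvd_pow_sub_one_iff hp hd, ← ih hd]
      exact ⟨d, rfl⟩
    · intro hdvd
      obtain ⟨e, rfl⟩ := exists_pow_eq_of_sq_dvd_sub_one hp
        ((pow_dvd_pow _ (by omega)).trans hdvd)
      have he := p_dvd_sub_one_of_p_dvd_pow_sub_one hc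
      obtain ⟨d, rfl⟩ := (ih he).mpr ((pow_succ_dvd_pow_sub_one_iff hp he _).mp hdvd)
      exact ⟨d, by rw [pow_succ, pow_mul]⟩

theorem exists_pow_eq_coe_iff (x : ℤ_[p]) {n : ℕ} (hn : n ≠ 0) :
    (∃ b : ℚ_[p], b ^ n = x) ↔ ∃ d : ℤ_[p], d ^ n = x := by
  refine ⟨fun ⟨b, hb⟩ => ?_, fun ⟨d, hd⟩ => ⟨d, by rw [← hd, coe_pow]⟩⟩
  have hb_le : ‖b‖ ≤ 1 := by
    rw [← pow_le_one_iff_of_nonneg (norm_nonneg b) hn, ← norm_pow, hb]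
    exact norm_le_one x
  exact ⟨⟨b, hb_le⟩, Subtype.ext hb⟩

theorem exists_pow_p_pow_eq_coe_iff (hp : Odd p) {a : ℤ_[p]} (ha : ¬ (p : ℤ_[p]) ∣ a)
    (m : ℕ) :
    (∃ b : ℚ_[p], b ^ p ^ m = a) ↔ (p : ℤ_[p]) ^ (m + 1) ∣ a ^ (p - 1) - 1 := by
  have hp_prime := Fact.out (p := p.Prime)
  have hcop : (p - 1).Coprime (p ^ m) :=
    ((Nat.coprime_self_sub_left hp_prime.one_le).mpr (Nat.coprime_one_left p)).pow_right m
  rw [← exists_pow_p_pow_eq_iff hp m (p_dvd_pow_sub_one_sub_one_of_not_dvd ha),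
    ← exists_pow_eq_coe_iff _ (pow_ne_zero m hp_prime.ne_zero), coe_pow]
  exact (pow_mem_range_pow_of_coprime hcop _).symm

theorem valuation_eq_iff {x : ℤ_[p]} {n : ℕ} (hn : n ≠ 0) :
    x.valuation = n ↔ (p : ℤ_[p]) ^ n ∣ x ∧ ¬ (p : ℤ_[p]) ^ (n + 1) ∣ x := by
  rcases eq_or_ne x 0 with rfl | hx
  · simp [hn.symm]
  simp only [← Ideal.mem_span_singleton, mem_span_pow_iff_le_valuation x hx]
  omega

end PadicInt

open PadicInt in
theorem stmt_16 (p : ℕ) [Fact p.Prime] (hodd : Odd p) (r : ℕ)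
    (a : ℤ_[p]) (ha : ¬ (p : ℤ_[p]) ∣ a) :
    ((∃ b : ℚ_[p], b ^ p ^ r = (a : ℚ_[p])) ↔ (p : ℤ_[p]) ^ (r + 1) ∣ (a ^ (p - 1) - 1)) ∧
    ∀ s : ℕ, 0 < s → s ≤ r →
      (((∃ b : ℚ_[p], b ^ p ^ (r - s) = (a : ℚ_[p])) ∧
          ¬ ∃ b : ℚ_[p], b ^ p ^ (r - s + 1) = (a : ℚ_[p])) ↔
        (a ^ (p - 1) - 1).valuation = (r : ℤ) - s + 1) := by
  refine ⟨exists_pow_p_pow_eq_coe_iff hodd ha r, fun s _ hsr => ?_⟩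
  have hcast : (r : ℤ) - s + 1 = ((r - s + 1 : ℕ) : ℤ) := by
    push_cast [Nat.cast_sub hsr]; ring
  rw [exists_pow_p_pow_eq_coe_iff hodd ha, exists_pow_p_pow_eq_coe_iff hodd ha, hcast,
    Nat.cast_inj, valuation_eq_iff (Nat.succ_ne_zero _)]
end

section
/- Let p be an odd prime and b ∈ ℤ_p a unit with v_p(b^{p−1} − 1) = 1. Set K_i = ℚ_p(ζ_p, b^{1/p^i}). Then for each i ≥ 1, the element π_i = (1 − ζ_p) / ∏_{j=1}^{i} (b^{1/p^{j−1}} − b^{1/p^j}) is a uniformizer of K_i, and the unique ramification break of the degree-p cyclic extension K_i/K_{i−1} is b_i = 1 + p(p^{i−1} − 1). -/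
/-!
Write `s = v (x - 1)` and `e = v p`. In the binomial expansion of `((x - 1) + 1) ^ p - 1` the
term `(x - 1) ^ p` dominates when `(p - 1) s < e` and the term `p (x - 1)` dominates when
`(p - 1) s > e`. Hence `(p - 1) v (ξ - 1) = e` for every `p`-th root of unity `ξ ≠ 1`, and along
the tower `βⱼ = b ^ (1 / pʲ)` the valuation of `βⱼ ^ (p - 1) - 1` is divided by `p` at each step,
starting from `e = (p - 1) pⁱ`. Thus `v (βⱼ - βⱼ₊₁) = (p - 1) p ^ (i - j - 1)`; these add up to
`pⁱ - 1`, while `v (1 - ζ) = pⁱ`, so `v πᵢ = 1`. For `σ` as in the statement,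
`σ πᵢ - πᵢ = πᵢ (σ βᵢ - βᵢ) / (βᵢ₋₁ - σ βᵢ)`, where `σ βᵢ / βᵢ` is a nontrivial `p`-th root of
unity, so `v (σ πᵢ - πᵢ) = 1 + pⁱ - (p - 1)`.
-/

structure IsAddValuation {K : Type*} [Field K] (v : K → ℤ) : Prop where
  map_mul : ∀ x y : K, x ≠ 0 → y ≠ 0 → v (x * y) = v x + v y
  min_le_map_add : ∀ x y : K, x ≠ 0 → y ≠ 0 → x + y ≠ 0 → min (v x) (v y) ≤ v (x + y)

namespace IsAddValuation

variable {K : Type*} [Field K] {v : K → ℤ} (hv : IsAddValuation v)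
include hv

theorem map_one : v 1 = 0 := by
  have h := hv.map_mul 1 1 one_ne_zero one_ne_zero
  rw [mul_one] at h
  omega

theorem map_pow {x : K} (hx : x ≠ 0) (n : ℕ) : v (x ^ n) = n * v x := by
  induction n with
  | zero => simpa using hv.map_one
  | succ n ih =>
    rw [pow_succ, hv.map_mul _ x (pow_ne_zero n hx) hx, ih]
    push_cast
    ring

theorem map_neg {x : K} (hx : x ≠ 0) : v (-x) = v x := by
  have h := hv.map_pow (neg_ne_zero.mpr hx) 2
  rw [neg_sq, hv.map_pow hx] at h
  omega

theorem map_sub_comm {x y : K} (h : x ≠ y) : v (x - y) = v (y - x) := by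
  rw [← neg_sub, hv.map_neg (sub_ne_zero.mpr h.symm)]

theorem map_div {x y : K} (hx : x ≠ 0) (hy : y ≠ 0) : v (x / y) = v x - v y := by
  have h := hv.map_mul (x / y) y (div_ne_zero hx hy) hy
  rw [div_mul_cancel₀ x hy] at h
  omega

theorem map_prod {ι : Type*} (s : Finset ι) (f : ι → K) (h : ∀ j ∈ s, f j ≠ 0) :
    v (∏ j ∈ s, f j) = ∑ j ∈ s, v (f j) := by
  classical
  induction s using Finset.induction_on with
  | empty => simpa using hv.map_one
  | insert a s ha ih =>
    rw [Finset.forall_mem_insert] at h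
    rw [Finset.prod_insert ha, Finset.sum_insert ha,
      hv.map_mul _ _ h.1 (Finset.prod_ne_zero_iff.mpr h.2), ih h.2]

theorem map_add_of_lt {x y : K} (hx : x ≠ 0) (hy : y ≠ 0) (h : v x < v y) :
    x + y ≠ 0 ∧ v (x + y) = v x := by
  have hxy : x + y ≠ 0 := by
    intro h0
    rw [eq_neg_of_add_eq_zero_right h0, hv.map_neg hx] at h
    exact h.false
  refine ⟨hxy, le_antisymm ?_ ((le_min le_rfl h.le).trans (hv.min_le_map_add x y hx hy hxy))⟩
  have h' := hv.min_le_map_add (x + y) (-y) hxy (neg_ne_zero.mpr hy) (by simpa using hx)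
  rw [add_neg_cancel_right, hv.map_neg hy] at h'
  omega

theorem sum_eq_zero_or_le_map_sum {ι : Type*} (s : Finset ι) (f : ι → K) (c : ℤ)
    (h : ∀ j ∈ s, f j ≠ 0 ∧ c ≤ v (f j)) :
    ∑ j ∈ s, f j = 0 ∨ c ≤ v (∑ j ∈ s, f j) := by
  classical
  induction s using Finset.induction_on with
  | empty => simp
  | insert a s ha ih =>
    rw [Finset.forall_mem_insert] at h
    rw [Finset.sum_insert ha]
    by_cases hsum : ∑ j ∈ s, f j = 0
    · exact .inr (by rw [hsum, add_zero]; exact h.1.2)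
    by_cases hz : f a + ∑ j ∈ s, f j = 0
    · exact .inl hz
    exact .inr ((le_min h.1.2 ((ih h.2).resolve_left hsum)).trans
      (hv.min_le_map_add _ _ h.1.1 hsum hz))

theorem map_sum_of_lt {ι : Type*} [DecidableEq ι] (s : Finset ι) (f : ι → K) {a : ι}
    (ha : a ∈ s) (h0 : ∀ j ∈ s, f j ≠ 0) (hlt : ∀ j ∈ s, j ≠ a → v (f a) < v (f j)) :
    ∑ j ∈ s, f j ≠ 0 ∧ v (∑ j ∈ s, f j) = v (f a) := by
  rw [← Finset.add_sum_erase s f ha]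
  by_cases hs : ∑ j ∈ s.erase a, f j = 0
  · rw [hs, add_zero]
    exact ⟨h0 a ha, rfl⟩
  have hle := (hv.sum_eq_zero_or_le_map_sum (s.erase a) f (v (f a) + 1) fun j hj =>
    ⟨h0 j (Finset.mem_of_mem_erase hj),
      hlt j (Finset.mem_of_mem_erase hj) (Finset.ne_of_mem_erase hj)⟩).resolve_left hs
  exact hv.map_add_of_lt (h0 a ha) hs (by omega)

theorem map_binomial_term_of_eq {p : ℕ} {x : K} (hx : x ≠ 1) {k : ℕ} (hk : k + 1 = p) :
    v ((x - 1) ^ (k + 1) * (p.choose (k + 1) : K)) = p * v (x - 1) := by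
  rw [hk, Nat.choose_self, Nat.cast_one, mul_one, hv.map_pow (sub_ne_zero.mpr hx)]

end IsAddValuation

theorem pow_sub_one_eq_sum {R : Type*} [CommRing R] (x : R) (p : ℕ) :
    x ^ p - 1 = ∑ k ∈ Finset.range p, (x - 1) ^ (k + 1) * (p.choose (k + 1) : R) := by
  have h := add_pow (x - 1) 1 p
  rw [sub_add_cancel, Finset.sum_range_succ'] at h
  simp only [one_pow, mul_one, pow_zero, Nat.choose_zero_right, Nat.cast_one] at h
  linear_combination h

theorem binomial_term_ne_zero {K : Type*} [Field K] [CharZero K] {p : ℕ} {x : K} (hx : x ≠ 1)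
    {k : ℕ} (hk : k < p) : (x - 1) ^ (k + 1) * (p.choose (k + 1) : K) ≠ 0 :=
  mul_ne_zero (pow_ne_zero _ (sub_ne_zero.mpr hx))
    (Nat.cast_ne_zero.mpr (Nat.choose_pos (by omega)).ne')

namespace IsAddValuation

variable {K : Type*} [Field K] [CharZero K] {v : K → ℤ} (hv : IsAddValuation v)
  {p : ℕ} (hp : p.Prime) (hnat : ∀ m : ℕ, m ≠ 0 → 0 ≤ v m) {x : K}
include hv hp hnat

theorem le_map_choose {k : ℕ} (hk0 : k ≠ 0) (hkp : k < p) : v p ≤ v (p.choose k) := by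
  obtain ⟨m, hm⟩ := hp.dvd_choose_self hk0 hkp
  have hm0 : m ≠ 0 := by
    rintro rfl
    exact (Nat.choose_pos hkp.le).ne' (by simpa using hm)
  rw [hm, Nat.cast_mul, hv.map_mul _ _ (Nat.cast_ne_zero.mpr hp.ne_zero)
    (Nat.cast_ne_zero.mpr hm0)]
  linarith [hnat m hm0]

theorem le_map_binomial_term (hx : x ≠ 1) {k : ℕ} (hk : k + 1 < p) :
    (k + 1) * v (x - 1) + v p ≤ v ((x - 1) ^ (k + 1) * (p.choose (k + 1) : K)) := by
  rw [hv.map_mul _ _ (pow_ne_zero _ (sub_ne_zero.mpr hx))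
    (Nat.cast_ne_zero.mpr (Nat.choose_pos hk.le).ne'), hv.map_pow (sub_ne_zero.mpr hx)]
  push_cast
  linarith [hv.le_map_choose hp hnat k.succ_ne_zero hk]

theorem map_pow_sub_one_of_lt (hx : x ≠ 1) (hs : ((p : ℤ) - 1) * v (x - 1) < v p) :
    x ^ p - 1 ≠ 0 ∧ v (x ^ p - 1) = p * v (x - 1) := by
  have he := hnat p hp.ne_zero
  have hlast : p - 1 + 1 = p := Nat.sub_add_cancel hp.one_le
  rw [pow_sub_one_eq_sum, ← hv.map_binomial_term_of_eq hx hlast]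
  refine hv.map_sum_of_lt _ _ (Finset.mem_range.mpr (by omega))
    (fun k hk => binomial_term_ne_zero hx (Finset.mem_range.mp hk)) fun k hk hne => ?_
  have hk : k + 1 < p := by have := Finset.mem_range.mp hk; omega
  rw [hv.map_binomial_term_of_eq hx hlast]
  have := hv.le_map_binomial_term hp hnat hx hk
  rcases le_or_gt 0 (v (x - 1)) with h0 | h0 <;> nlinarith

theorem pow_sub_one_ne_zero_of_gt (hx : x ≠ 1) (hs : v p < ((p : ℤ) - 1) * v (x - 1)) :
    x ^ p - 1 ≠ 0 := by
  have he := hnat p hp.ne_zero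
  have hs0 : 0 < v (x - 1) := by nlinarith [hp.two_le]
  have hfirst : v ((x - 1) ^ (0 + 1) * (p.choose (0 + 1) : K)) = v (x - 1) + v p := by
    rw [Nat.choose_one_right, pow_one,
      hv.map_mul _ _ (sub_ne_zero.mpr hx) (Nat.cast_ne_zero.mpr hp.ne_zero)]
  rw [pow_sub_one_eq_sum]
  refine (hv.map_sum_of_lt _ _ (Finset.mem_range.mpr hp.pos)
    (fun k hk => binomial_term_ne_zero hx (Finset.mem_range.mp hk)) fun k hk hne => ?_).1
  rw [hfirst]
  rcases (Nat.succ_le_of_lt (Finset.mem_range.mp hk)).lt_or_eq with hk | hk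
  · have := hv.le_map_binomial_term hp hnat hx hk
    have : 1 ≤ k := Nat.one_le_iff_ne_zero.mpr hne
    nlinarith
  · rw [hv.map_binomial_term_of_eq hx hk]
    nlinarith

theorem pow_sub_one_eq_zero_or_lt (hx : x ≠ 1) (hs : v p ≤ ((p : ℤ) - 1) * v (x - 1))
    (hp0 : 0 < v p) : x ^ p - 1 = 0 ∨ v p < v (x ^ p - 1) := by
  have hs0 : 0 < v (x - 1) := by nlinarith [hp.two_le]
  rw [pow_sub_one_eq_sum]
  refine (hv.sum_eq_zero_or_le_map_sum _ _ (v p + 1) fun k hk =>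
    ⟨binomial_term_ne_zero hx (Finset.mem_range.mp hk), ?_⟩).imp_right (by omega)
  rcases (Nat.succ_le_of_lt (Finset.mem_range.mp hk)).lt_or_eq with hk | hk
  · nlinarith [hv.le_map_binomial_term hp hnat hx hk]
  · rw [hv.map_binomial_term_of_eq hx hk]
    nlinarith

theorem map_pow_sub_one_of_le (hp0 : 0 < v p) (hx : x ^ p ≠ 1) (h : v (x ^ p - 1) ≤ v p) :
    v (x ^ p - 1) = p * v (x - 1) := by
  have hx1 : x ≠ 1 := by
    rintro rfl
    exact hx (one_pow p)
  rcases lt_or_ge (((p : ℤ) - 1) * v (x - 1)) (v p) with hs | hs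
  · exact (hv.map_pow_sub_one_of_lt hp hnat hx1 hs).2
  · rcases hv.pow_sub_one_eq_zero_or_lt hp hnat hx1 hs hp0 with h0 | hlt
    · exact absurd (sub_eq_zero.mp h0) hx
    · omega

theorem map_sub_one_of_pow_eq_one {ξ : K} (hξ : ξ ^ p = 1) (hξ1 : ξ ≠ 1) :
    ((p : ℤ) - 1) * v (ξ - 1) = v p := by
  have h0 : ξ ^ p - 1 = 0 := sub_eq_zero.mpr hξ
  rcases lt_trichotomy (((p : ℤ) - 1) * v (ξ - 1)) (v p) with h | h | h
  · exact absurd h0 (hv.map_pow_sub_one_of_lt hp hnat hξ1 h).1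
  · exact h
  · exact absurd h0 (hv.pow_sub_one_ne_zero_of_gt hp hnat hξ1 h)

theorem map_sub_of_pow_eq_pow {y z : K} (hy : y ≠ 0) (hvy : v y = 0) (hzy : z ^ p = y ^ p)
    (hne : z ≠ y) : ((p : ℤ) - 1) * v (z - y) = v p := by
  have hξ : (z / y) ^ p = 1 := by rw [div_pow, hzy, div_self (pow_ne_zero p hy)]
  have hξ1 : z / y ≠ 1 := fun h => hne ((div_eq_one_iff_eq hy).mp h)
  have hzy' : z - y = y * (z / y - 1) := by field_simp
  rw [hzy', hv.map_mul _ _ hy (sub_ne_zero.mpr hξ1), hvy, zero_add,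
    hv.map_sub_one_of_pow_eq_one hp hnat hξ hξ1]

theorem map_one_sub_of_isPrimitiveRoot {n : ℕ} (hvp : v p = ((p : ℤ) - 1) * p ^ n) {ζ : K}
    (hζ : IsPrimitiveRoot ζ p) : v (1 - ζ) = p ^ n := by
  have hζ1 := hζ.ne_one hp.one_lt
  rw [hv.map_sub_comm hζ1.symm]
  exact mul_left_cancel₀ (by have := hp.two_le; omega)
    ((hv.map_sub_one_of_pow_eq_one hp hnat hζ.pow_eq_one hζ1).trans hvp)

end IsAddValuation

structure IsUnitRootTower {K : Type*} [Field K] (v : K → ℤ) (p n : ℕ) (β : ℕ → K) : Prop where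
  succ_pow : ∀ j < n, β (j + 1) ^ p = β j
  base_ne_zero : β 0 ≠ 0
  map_base : v (β 0) = 0
  base_pow_ne_one : β 0 ^ (p - 1) ≠ 1
  map_base_pow_sub_one : v (β 0 ^ (p - 1) - 1) = v p

noncomputable def towerUniformizer {K : Type*} [Field K] (ζ : K) (β : ℕ → K) (n : ℕ) : K :=
  (1 - ζ) / ∏ j ∈ Finset.range n, (β j - β (j + 1))

theorem apply_towerUniformizer_succ_sub {K : Type*} [Field K] {ζ : K} {β : ℕ → K} {m : ℕ}
    {σ : K →+* K} (hσζ : σ ζ = ζ) (hfix : ∀ j ≤ m, σ (β j) = β j)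
    (hQ : ∏ j ∈ Finset.range m, (β j - β (j + 1)) ≠ 0) (hD : β m - β (m + 1) ≠ 0)
    (hD' : β m - σ (β (m + 1)) ≠ 0) :
    σ (towerUniformizer ζ β (m + 1)) - towerUniformizer ζ β (m + 1) =
      towerUniformizer ζ β (m + 1) * (σ (β (m + 1)) - β (m + 1)) / (β m - σ (β (m + 1))) := by
  have hσQ : σ (∏ j ∈ Finset.range m, (β j - β (j + 1))) =
      ∏ j ∈ Finset.range m, (β j - β (j + 1)) := by
    rw [map_prod]
    refine Finset.prod_congr rfl fun j hj => ?_
    have := Finset.mem_range.mp hj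
    rw [map_sub, hfix j this.le, hfix (j + 1) this]
  rw [towerUniformizer, Finset.prod_range_succ, map_div₀, map_mul, hσQ, map_sub, map_one, hσζ,
    map_sub, hfix m le_rfl]
  field_simp
  ring

namespace IsUnitRootTower

variable {K : Type*} [Field K] {v : K → ℤ} {p n : ℕ} {β : ℕ → K}
  (hT : IsUnitRootTower v p n β)
include hT

theorem apply_eq_self_of_le {σ : K →+* K} {m : ℕ} (hm : m ≤ n) (hσ : σ (β m) = β m) :
    ∀ j ≤ m, σ (β j) = β j := by
  intro j hj
  induction hj using Nat.decreasingInduction with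
  | self => exact hσ
  | of_succ j hj ih => rw [← hT.succ_pow j (by omega), map_pow, ih]

variable (hv : IsAddValuation v)
include hv

theorem ne_zero_and_map_eq_zero (hp : p ≠ 0) : ∀ j ≤ n, β j ≠ 0 ∧ v (β j) = 0 := by
  intro j
  induction j with
  | zero => exact fun _ => ⟨hT.base_ne_zero, hT.map_base⟩
  | succ j ih =>
    intro hj
    obtain ⟨hne, hv0⟩ := ih (by omega)
    have hpow := hT.succ_pow j hj
    have hne' : β (j + 1) ≠ 0 := fun h => hne (by rw [← hpow, h, zero_pow hp])
    refine ⟨hne', ?_⟩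
    have h := hv.map_pow hne' p
    rw [hpow, hv0] at h
    exact (mul_eq_zero.mp h.symm).resolve_left (by exact_mod_cast hp)

variable [CharZero K] (hp : p.Prime) (hnat : ∀ m : ℕ, m ≠ 0 → 0 ≤ v m)
  (hvp : v p = ((p : ℤ) - 1) * p ^ n)
include hp hnat hvp

theorem map_pow_sub_one : ∀ j ≤ n,
    β j ^ (p - 1) ≠ 1 ∧ v (β j ^ (p - 1) - 1) = ((p : ℤ) - 1) * p ^ (n - j) := by
  have hp1 : (1 : ℤ) ≤ (p : ℤ) - 1 := by have := hp.two_le; omega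
  intro j
  induction j with
  | zero => exact fun _ => ⟨hT.base_pow_ne_one, by rw [hT.map_base_pow_sub_one, hvp, Nat.sub_zero]⟩
  | succ j ih =>
    intro hj
    obtain ⟨hne, hvj⟩ := ih (by omega)
    have hxp : (β (j + 1) ^ (p - 1)) ^ p = β j ^ (p - 1) := by
      rw [← pow_mul, mul_comm, pow_mul, hT.succ_pow j hj]
    have hle : v ((β (j + 1) ^ (p - 1)) ^ p - 1) ≤ v p := by
      rw [hxp, hvj, hvp]
      exact mul_le_mul_of_nonneg_left
        (pow_le_pow_right₀ (by exact_mod_cast hp.one_le) (Nat.sub_le n j)) (by omega)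
    have hvp0 : 0 < v p := by
      rw [hvp]
      exact mul_pos (by omega) (pow_pos (by exact_mod_cast hp.pos) n)
    have key := hv.map_pow_sub_one_of_le hp hnat hvp0 (hxp ▸ hne) hle
    refine ⟨fun h => hne (by rw [← hxp, h, one_pow]), ?_⟩
    rw [hxp, hvj, show n - j = n - (j + 1) + 1 by omega, pow_succ] at key
    have hp0 : (p : ℤ) ≠ 0 := by exact_mod_cast hp.ne_zero
    exact mul_left_cancel₀ hp0 (by linarith)

theorem map_sub_succ : ∀ j < n,
    β j - β (j + 1) ≠ 0 ∧ v (β j - β (j + 1)) = ((p : ℤ) - 1) * p ^ (n - (j + 1)) := by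
  intro j hj
  obtain ⟨hβne, hβv⟩ := hT.ne_zero_and_map_eq_zero hv hp.ne_zero (j + 1) hj
  obtain ⟨hne, hvj⟩ := hT.map_pow_sub_one hv hp hnat hvp (j + 1) hj
  have heq : β j - β (j + 1) = β (j + 1) * (β (j + 1) ^ (p - 1) - 1) := by
    rw [← hT.succ_pow j hj, mul_sub, mul_one, ← pow_succ', Nat.sub_add_cancel hp.one_le]
  rw [heq]
  exact ⟨mul_ne_zero hβne (sub_ne_zero.mpr hne),
    by rw [hv.map_mul _ _ hβne (sub_ne_zero.mpr hne), hβv, hvj, zero_add]⟩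

theorem map_prod_sub_succ :
    ∏ j ∈ Finset.range n, (β j - β (j + 1)) ≠ 0 ∧
      v (∏ j ∈ Finset.range n, (β j - β (j + 1))) = p ^ n - 1 := by
  have h := hT.map_sub_succ hv hp hnat hvp
  refine ⟨Finset.prod_ne_zero_iff.mpr fun j hj => (h j (Finset.mem_range.mp hj)).1, ?_⟩
  rw [hv.map_prod _ _ fun j hj => (h j (Finset.mem_range.mp hj)).1,
    Finset.sum_congr rfl fun j hj => (h j (Finset.mem_range.mp hj)).2, ← Finset.mul_sum]
  have hreflect : ∑ j ∈ Finset.range n, (p : ℤ) ^ (n - (j + 1)) =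
      ∑ j ∈ Finset.range n, (p : ℤ) ^ j := by
    rw [← Finset.sum_range_reflect]
    refine Finset.sum_congr rfl fun j hj => ?_
    rw [Finset.mem_range] at hj
    congr 1
    omega
  rw [hreflect, mul_comm, geom_sum_mul]

theorem map_towerUniformizer {ζ : K} (hζ : IsPrimitiveRoot ζ p) :
    towerUniformizer ζ β n ≠ 0 ∧ v (towerUniformizer ζ β n) = 1 := by
  have hζ1 : 1 - ζ ≠ 0 := sub_ne_zero.mpr (hζ.ne_one hp.one_lt).symm
  obtain ⟨hP, hvP⟩ := hT.map_prod_sub_succ hv hp hnat hvp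
  refine ⟨div_ne_zero hζ1 hP, ?_⟩
  rw [towerUniformizer, hv.map_div hζ1 hP, hv.map_one_sub_of_isPrimitiveRoot hp hnat hvp hζ, hvP]
  ring

theorem map_sub_towerUniformizer (hn : n ≠ 0) {ζ : K} (hζ : IsPrimitiveRoot ζ p)
    {σ : K →+* K} (hσζ : σ ζ = ζ) (hσ : σ (β (n - 1)) = β (n - 1)) (hσ' : σ (β n) ≠ β n) :
    v (σ (towerUniformizer ζ β n) - towerUniformizer ζ β n) =
      1 + (1 + (p : ℤ) * ((p : ℤ) ^ (n - 1) - 1)) := by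
  obtain ⟨m, rfl⟩ := Nat.exists_eq_add_one_of_ne_zero hn
  rw [Nat.add_sub_cancel] at hσ ⊢
  obtain ⟨hπ, hvπ⟩ := hT.map_towerUniformizer hv hp hnat hvp hζ
  obtain ⟨hβ, hvβ⟩ := hT.ne_zero_and_map_eq_zero hv hp.ne_zero (m + 1) le_rfl
  obtain ⟨hD, hvD⟩ := hT.map_sub_succ hv hp hnat hvp m (Nat.lt_succ_self m)
  rw [Nat.sub_self, pow_zero, mul_one] at hvD
  have hvσβ : v (σ (β (m + 1)) - β (m + 1)) = p ^ (m + 1) := by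
    refine mul_left_cancel₀ (by have := hp.two_le; omega) (Eq.trans ?_ hvp)
    refine hv.map_sub_of_pow_eq_pow hp hnat hβ hvβ ?_ hσ'
    rw [← map_pow, hT.succ_pow m (Nat.lt_succ_self m), hσ]
  have hlt : v (β m - β (m + 1)) < v (β (m + 1) - σ (β (m + 1))) := by
    rw [hvD, hv.map_sub_comm hσ'.symm, hvσβ]
    calc (p : ℤ) - 1 < p := by omega
      _ ≤ p ^ (m + 1) := le_self_pow₀ (by exact_mod_cast hp.one_le) m.succ_ne_zero
  obtain ⟨hD', hvD'⟩ := hv.map_add_of_lt hD (sub_ne_zero.mpr hσ'.symm) hlt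
  rw [sub_add_sub_cancel] at hD' hvD'
  have hQ : ∏ j ∈ Finset.range m, (β j - β (j + 1)) ≠ 0 := left_ne_zero_of_mul <| by
    rw [← Finset.prod_range_succ]
    exact (hT.map_prod_sub_succ hv hp hnat hvp).1
  rw [apply_towerUniformizer_succ_sub hσζ (hT.apply_eq_self_of_le (Nat.le_succ m) hσ) hQ hD hD',
    hv.map_div (mul_ne_zero hπ (sub_ne_zero.mpr hσ')) hD',
    hv.map_mul _ _ hπ (sub_ne_zero.mpr hσ'), hvπ, hvσβ, hvD', hvD]
  ring

end IsUnitRootTower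

theorem PadicInt.valuation_eq_zero_of_not_dvd {p : ℕ} [Fact p.Prime] {b : ℤ_[p]}
    (hb : ¬ (p : ℤ_[p]) ∣ b) : b.valuation = 0 := by
  have hb0 : b ≠ 0 := by
    rintro rfl
    exact hb (dvd_zero _)
  have h := PadicInt.mem_span_pow_iff_le_valuation b hb0 1
  rw [pow_one, Ideal.mem_span_singleton] at h
  exact Nat.lt_one_iff.mp (not_le.mp (mt h.mpr hb))

section PadicAlgebra

variable {p : ℕ} [Fact p.Prime] {K : Type*} [Field K] [Algebra ℚ_[p] K] {v : K → ℤ} {e : ℤ}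
  (hv_ext : ∀ x : ℚ_[p], x ≠ 0 → v (algebraMap ℚ_[p] K x) = e * x.valuation)
include hv_ext

theorem map_algebraMap_padicInt {a : ℤ_[p]} (ha : a ≠ 0) :
    v (algebraMap ℚ_[p] K a) = e * a.valuation := by
  rw [hv_ext _ (PadicInt.coe_ne_zero.mpr ha), PadicInt.valuation_coe]

theorem isUnitRootTower_of_padicInt {b : ℤ_[p]} (hbu : ¬ (p : ℤ_[p]) ∣ b)
    (hb1 : (b ^ (p - 1) - 1).valuation = 1) {n : ℕ} {β : ℕ → K}
    (hβ0 : β 0 = algebraMap ℚ_[p] K b) (hβ : ∀ j < n, β (j + 1) ^ p = β j) :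
    IsUnitRootTower v p n β := by
  have hb0 : b ≠ 0 := by
    rintro rfl
    exact hbu (dvd_zero _)
  have hb10 : b ^ (p - 1) - 1 ≠ 0 := by
    intro h
    rw [h, PadicInt.valuation_zero] at hb1
    exact zero_ne_one hb1
  have hβ01 : β 0 ^ (p - 1) - 1 = algebraMap ℚ_[p] K ((b ^ (p - 1) - 1 : ℤ_[p]) : ℚ_[p]) := by
    rw [hβ0, ← map_pow, ← map_one (algebraMap ℚ_[p] K), ← map_sub]
    norm_cast
  refine ⟨hβ, ?_, ?_, ?_, ?_⟩
  · rw [hβ0]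
    exact (map_ne_zero _).mpr (PadicInt.coe_ne_zero.mpr hb0)
  · rw [hβ0, map_algebraMap_padicInt hv_ext hb0, PadicInt.valuation_eq_zero_of_not_dvd hbu]
    simp
  · rw [← sub_ne_zero, hβ01]
    exact (map_ne_zero _).mpr (PadicInt.coe_ne_zero.mpr hb10)
  · rw [hβ01, map_algebraMap_padicInt hv_ext hb10, hb1, ← map_natCast (algebraMap ℚ_[p] K),
      hv_ext _ (Nat.cast_ne_zero.mpr (Fact.out : p.Prime).ne_zero), Padic.valuation_p]
    simp

end PadicAlgebra

/-- A nontrivial `σ ∈ Gal(K_i/K_{i-1})` is encoded as an automorphism of `K` fixing `ζ` and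
`β (i - 1)` but not `β i`. Since `πᵢ` is a uniformizer, `v (σ πᵢ - πᵢ) = 1 + bᵢ` says that `bᵢ`
is the ramification break. -/
theorem stmt_18_general (p : ℕ) [Fact p.Prime]
    (b : ℤ_[p]) (hbu : ¬ (p : ℤ_[p]) ∣ b) (hb1 : (b ^ (p - 1) - 1).valuation = 1)
    (i : ℕ) (hi : 1 ≤ i)
    {K : Type*} [Field K] [Algebra ℚ_[p] K]
    (ζ : K) (hζ : IsPrimitiveRoot ζ p)
    (β : ℕ → K) (hβ0 : β 0 = algebraMap ℚ_[p] K (b : ℚ_[p]))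
    (hβ : ∀ j, (β (j + 1)) ^ p = β j)
    -- `v` is the normalized valuation of `K = K_i`
    (v : K → ℤ)
    (hv_mul : ∀ x y : K, x ≠ 0 → y ≠ 0 → v (x * y) = v x + v y)
    (hv_add : ∀ x y : K, x ≠ 0 → y ≠ 0 → x + y ≠ 0 → min (v x) (v y) ≤ v (x + y))
    (hv_ext : ∀ x : ℚ_[p], x ≠ 0 →
      v (algebraMap ℚ_[p] K x) = ((p - 1 : ℤ) * (p : ℤ) ^ i) * x.valuation) :
    v ((1 - ζ) / ∏ j ∈ Finset.range i, (β j - β (j + 1))) = 1 ∧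
      ∀ σ : K ≃ₐ[ℚ_[p]] K, σ ζ = ζ → σ (β (i - 1)) = β (i - 1) → σ (β i) ≠ β i →
        v (σ ((1 - ζ) / ∏ j ∈ Finset.range i, (β j - β (j + 1))) -
            (1 - ζ) / ∏ j ∈ Finset.range i, (β j - β (j + 1))) =
          1 + (1 + (p : ℤ) * ((p : ℤ) ^ (i - 1) - 1)) := by
  have hp : p.Prime := Fact.out
  have : CharZero K := charZero_of_injective_algebraMap (algebraMap ℚ_[p] K).injective
  have hv : IsAddValuation v := ⟨hv_mul, hv_add⟩
  have hvnat (m : ℕ) (hm : m ≠ 0) : v m = ((p : ℤ) - 1) * p ^ i * padicValNat p m := by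
    rw [← map_natCast (algebraMap ℚ_[p] K), hv_ext _ (Nat.cast_ne_zero.mpr hm),
      Padic.valuation_natCast]
  have hnat (m : ℕ) (hm : m ≠ 0) : 0 ≤ v m := by
    rw [hvnat m hm]
    have := hp.two_le
    exact mul_nonneg (mul_nonneg (by omega) (by positivity)) (by positivity)
  have hvp : v p = ((p : ℤ) - 1) * p ^ i := by
    rw [hvnat p hp.ne_zero, padicValNat_self, Nat.cast_one, mul_one]
  have hT : IsUnitRootTower v p i β :=
    isUnitRootTower_of_padicInt hv_ext hbu hb1 hβ0 fun j _ => hβ j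
  exact ⟨(hT.map_towerUniformizer hv hp hnat hvp hζ).2, fun σ hσζ hσ hσ' =>
    hT.map_sub_towerUniformizer hv hp hnat hvp (by omega) hζ (σ := σ) hσζ hσ hσ'⟩

/-- The uniformizer and ramification break of the degree-`p` cyclic extension
`K_i = ℚ_p(ζ_p, b^{1/pⁱ})` over `K_{i-1}`, for a unit `b` with `v_p(b^{p-1}-1) = 1`.
Here `K` plays the role of `K_i`, the function `v` is the normalized valuation of
`K_i` (characterized by being a surjective additive valuation extending
`(p-1)pⁱ` times the `p`-adic valuation, since `K_i/ℚ_p` is totally ramified of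
degree `(p-1)pⁱ`), and a nontrivial `σ ∈ Gal(K_i/K_{i-1})` is an automorphism of
`K` fixing `ζ_p` and `b^{1/p^{i-1}}` but not `b^{1/pⁱ}`.  The conclusion
`v(σπᵢ - πᵢ) = 1 + bᵢ` for all such `σ` says precisely that `πᵢ` is a uniformizer
and the unique ramification break of `K_i/K_{i-1}` is `bᵢ = 1 + p(p^{i-1} - 1)`. -/
theorem stmt_18 (p : ℕ) [Fact p.Prime] (hodd : Odd p)
    (b : ℤ_[p]) (hbu : ¬ (p : ℤ_[p]) ∣ b) (hb1 : (b ^ (p - 1) - 1).valuation = 1)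
    (i : ℕ) (hi : 1 ≤ i)
    {K : Type*} [Field K] [Algebra ℚ_[p] K]
    (ζ : K) (hζ : IsPrimitiveRoot ζ p)
    (β : ℕ → K) (hβ0 : β 0 = algebraMap ℚ_[p] K (b : ℚ_[p]))
    (hβ : ∀ j, (β (j + 1)) ^ p = β j)
    (htop : IntermediateField.adjoin ℚ_[p] ({ζ, β i} : Set K) = ⊤)
    -- `v` is the normalized valuation of `K = K_i`
    (v : K → ℤ)
    (hv_mul : ∀ x y : K, x ≠ 0 → y ≠ 0 → v (x * y) = v x + v y)
    (hv_add : ∀ x y : K, x ≠ 0 → y ≠ 0 → x + y ≠ 0 → min (v x) (v y) ≤ v (x + y))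
    (hv_ext : ∀ x : ℚ_[p], x ≠ 0 →
      v (algebraMap ℚ_[p] K x) = ((p - 1 : ℤ) * (p : ℤ) ^ i) * x.valuation)
    (hv_surj : ∀ n : ℤ, ∃ x : K, x ≠ 0 ∧ v x = n) :
    v ((1 - ζ) / ∏ j ∈ Finset.range i, (β j - β (j + 1))) = 1 ∧
      ∀ σ : K ≃ₐ[ℚ_[p]] K, σ ζ = ζ → σ (β (i - 1)) = β (i - 1) → σ (β i) ≠ β i →
        v (σ ((1 - ζ) / ∏ j ∈ Finset.range i, (β j - β (j + 1))) -
            (1 - ζ) / ∏ j ∈ Finset.range i, (β j - β (j + 1))) =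
          1 + (1 + (p : ℤ) * ((p : ℤ) ^ (i - 1) - 1)) :=
  stmt_18_general p b hbu hb1 i hi ζ hζ β hβ0 hβ v hv_mul hv_add hv_ext
end
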